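/- arXiv:2504.17644 — 8 statements merged into one kernel-verified Lean document; each statement's English description precedes it below -/
import Mathlib

section
/- For any odd positive integers k and l, the paperfolding values satisfy f_k + f_l ≡ f_{kl} (mod 2). -/
/-!
For odd `n`, `paperfold m n = n / 2 % 2 ^ m`, whose parity is that of `n / 2` once `m ≥ 1`.
For odd `k, l` one has `k * l / 2 = k * (l / 2) + k / 2 ≡ l / 2 + k / 2 (mod 2)`.
-/

/-- The odd part of a natural number: `n / 2 ^ v₂(n)`. -/
def oddPart (n : ℕ) : ℕ := n / 2 ^ (n.factorization 2)

/-- The `m`-th level paperfolding sequence: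
`f n = (1/2) ⌊(k - 1) mod 2^(m+1)⌋` where `k` is the odd part of `n`. -/
def paperfold (m n : ℕ) : ℕ := ((oddPart n - 1) % 2 ^ (m + 1)) / 2

lemma oddPart_of_odd {n : ℕ} (hn : Odd n) : oddPart n = n := by
  rw [oddPart, Nat.factorization_eq_zero_of_not_dvd hn.not_two_dvd_nat, pow_zero, Nat.div_one]

lemma paperfold_of_odd (m : ℕ) {n : ℕ} (hn : Odd n) : paperfold m n = n / 2 % 2 ^ m := by
  obtain ⟨a, rfl⟩ := hn
  rw [paperfold, oddPart_of_odd ⟨a, rfl⟩, Nat.add_sub_cancel, pow_succ', Nat.mul_mod_mul_left,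
    Nat.mul_div_cancel_left _ two_pos, Nat.mul_add_div two_pos, Nat.div_eq_of_lt one_lt_two,
    add_zero]

lemma paperfold_modEq_div_two_of_odd {m n : ℕ} (hm : 1 ≤ m) (hn : Odd n) :
    paperfold m n ≡ n / 2 [MOD 2] := by
  rw [paperfold_of_odd m hn]
  exact Nat.mod_mod_of_dvd _ (dvd_pow_self 2 (by omega))

lemma Nat.div_two_add_div_two_modEq_mul_div_two {k l : ℕ} (hk : Odd k) (hl : Odd l) :
    k / 2 + l / 2 ≡ k * l / 2 [MOD 2] := by
  have hk2 : k ≡ 1 [MOD 2] := Nat.odd_iff.mp hk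
  rw [Nat.odd_mul_odd_div_two hk2 (Nat.odd_iff.mp hl), add_comm (k / 2)]
  exact Nat.ModEq.add_right _ (by simpa using (hk2.mul_right (l / 2)).symm)

theorem paperfold_mul_odd_general (m : ℕ) (hm : 1 ≤ m) (k l : ℕ)
    (hk' : Odd k) (hl' : Odd l) :
    paperfold m k + paperfold m l ≡ paperfold m (k * l) [MOD 2] :=
  calc paperfold m k + paperfold m l
      ≡ k / 2 + l / 2 [MOD 2] :=
        (paperfold_modEq_div_two_of_odd hm hk').add (paperfold_modEq_div_two_of_odd hm hl')
    _ ≡ k * l / 2 [MOD 2] := Nat.div_two_add_div_two_modEq_mul_div_two hk' hl'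
    _ ≡ paperfold m (k * l) [MOD 2] := (paperfold_modEq_div_two_of_odd hm (hk'.mul hl')).symm

/-- for odd positive integers `k, l`,
`f k + f l ≡ f (k*l) (mod 2)`. -/
theorem paperfold_mul_odd (m : ℕ) (hm : 1 ≤ m) (k l : ℕ)
    (hk : 1 ≤ k) (hl : 1 ≤ l) (hk' : Odd k) (hl' : Odd l) :
    paperfold m k + paperfold m l ≡ paperfold m (k * l) [MOD 2] :=
  paperfold_mul_odd_general m hm k l hk' hl'
end

section
/- The map n ↦ f_n mod 2 from the positive integers to ℤ/2ℤ is a homomorphism from the multiplicative semigroup of positive integers to the additive group ℤ/2ℤ, i.e., f_{mn} ≡ f_m + f_n (mod 2) for all positive integers m, n. -/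
lemma oddPart_odd (n : ℕ) (hn : n ≠ 0) : Odd (oddPart n) := by
  have h := Nat.not_dvd_ordCompl Nat.prime_two hn
  rcases Nat.even_or_odd (oddPart n) with h2 | h2
  · exact absurd h2.two_dvd h
  · exact h2

lemma oddPart_mul (a b : ℕ) : oddPart (a * b) = oddPart a * oddPart b :=
  Nat.ordCompl_mul a b 2

lemma paperfold_mod (m n : ℕ) (hm : 1 ≤ m) (h : Odd (oddPart n)) :
    paperfold m n % 2 = (oddPart n / 2) % 2 := by
  obtain ⟨j, hj⟩ := h
  unfold paperfold
  rw [hj]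
  have h1 : 2 * j + 1 - 1 = 2 * j := by omega
  have h2 : (2:ℕ) ^ (m + 1) = 2 * 2 ^ m := by ring
  rw [h1, h2, Nat.mod_mul_right_div_self, Nat.mul_div_cancel_left _ (by norm_num)]
  rw [Nat.mod_mod_of_dvd _ (dvd_pow_self 2 (Nat.one_le_iff_ne_zero.mp hm))]
  omega

/-- `n ↦ f n mod 2` is a homomorphism from the multiplicative
semigroup of positive integers to `ℤ/2ℤ`:
`f (a*b) ≡ f a + f b (mod 2)` for all positive `a, b`. -/
theorem paperfold_mod_two_hom (m : ℕ) (hm : 1 ≤ m) (a b : ℕ)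
    (ha : 1 ≤ a) (hb : 1 ≤ b) :
    ((paperfold m (a * b) : ZMod 2) = (paperfold m a : ZMod 2) + (paperfold m b : ZMod 2)) := by
  have hoa := oddPart_odd a (by omega)
  have hob := oddPart_odd b (by omega)
  have hoab := oddPart_odd (a * b) (by positivity)
  rw [← ZMod.natCast_mod (paperfold m (a * b)) 2, ← ZMod.natCast_mod (paperfold m a) 2,
    ← ZMod.natCast_mod (paperfold m b) 2,
    paperfold_mod m _ hm hoab, paperfold_mod m _ hm hoa, paperfold_mod m _ hm hob,
    ← Nat.cast_add, ← ZMod.natCast_mod (_ + _) 2]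
  congr 1
  rw [oddPart_mul]
  obtain ⟨x, hx⟩ := hoa
  obtain ⟨y, hy⟩ := hob
  rw [hx, hy]
  have : (2 * x + 1) * (2 * y + 1) = 2 * (2 * (x * y) + x + y) + 1 := by ring
  rw [this]
  omega
end

section
/- Let p be an odd prime and m ≥ 1 the 2-adic valuation of p−1. Let (f_n) be the m-th level paperfolding sequence. Then the sequence n ↦ f_{p^n − 1} (mod 2) is not eventually periodic; in particular, for every even period d and threshold N there exists n ≥ N with f_{p^{nd}−1} ≢ f_{p^{3nd}−1} (mod 2). -/
lemma odd_oddPart {n : ℕ} (hn : n ≠ 0) : Odd (oddPart n) :=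
  Nat.odd_iff.mpr (Nat.two_dvd_ne_zero.mp (Nat.not_dvd_ordCompl Nat.prime_two hn))

lemma oddPart_mul_of_odd (a : ℕ) {b : ℕ} (hb : Odd b) : oddPart (a * b) = oddPart a * b := by
  have hb2 : b.factorization 2 = 0 :=
    Nat.factorization_eq_zero_of_not_dvd (Nat.not_even_iff_odd.mpr hb ∘ even_iff_two_dvd.mpr)
  simpa [oddPart, hb2] using Nat.ordCompl_mul a b 2

lemma paperfold_mod_two {m : ℕ} (hm : 1 ≤ m) (n : ℕ) :
    paperfold m n % 2 = oddPart n % 4 / 2 := by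
  have h4 : 4 ∣ 2 ^ (m + 1) := by
    simpa using Nat.pow_dvd_pow 2 (by omega : 2 ≤ m + 1)
  rcases eq_or_ne n 0 with rfl | hn
  · simp [paperfold, oddPart]
  · have hodd := Nat.odd_iff.mp (odd_oddPart hn)
    unfold paperfold
    rw [← Nat.mod_mul_right_div_self, show 2 * 2 = 4 from rfl, Nat.mod_mod_of_dvd _ h4]
    omega

lemma pow_mod_four_of_even {p n : ℕ} (hp : Odd p) (hn : Even n) : p ^ n % 4 = 1 := by
  obtain ⟨k, rfl⟩ := hn
  have hsq : p ^ 2 % 4 = 1 := by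
    obtain ⟨c, rfl⟩ := hp
    ring_nf
    omega
  rw [← two_mul, pow_mul, Nat.pow_mod, hsq, one_pow, Nat.one_mod]

lemma pow_three_sub_one (q : ℕ) : q ^ 3 - 1 = (q - 1) * (q ^ 2 + q + 1) := by
  rcases q with _ | q
  · simp
  · simp only [Nat.add_sub_cancel]
    ring_nf
    omega

lemma paperfold_pow_three_sub_one_mod_two_ne {m q : ℕ} (hm : 1 ≤ m) (hq : q % 4 = 1)
    (hq1 : q ≠ 1) :
    paperfold m (q ^ 3 - 1) % 2 ≠ paperfold m (q - 1) % 2 := by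
  have hS : q ^ 2 + q + 1 ≡ 3 [MOD 4] := by
    simp [Nat.ModEq, Nat.add_mod, Nat.pow_mod, hq]
  have hSodd : Odd (q ^ 2 + q + 1) := Nat.odd_iff.mpr (by simp [Nat.ModEq] at hS; omega)
  have hk := Nat.odd_iff.mp (odd_oddPart (by omega : q - 1 ≠ 0))
  rw [paperfold_mod_two hm, paperfold_mod_two hm, pow_three_sub_one,
    oddPart_mul_of_odd _ hSodd, Nat.mul_mod, hS]
  omega

lemma exists_even_eq_three_mul_of_eventually_periodic {α : Type*} {g : ℕ → α} {N d : ℕ}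
    (hd : 1 ≤ d) (h : ∀ n ≥ N, g (n + d) = g n) :
    ∃ n, Even n ∧ n ≠ 0 ∧ g (3 * n) = g n := by
  have hper : Function.Periodic (fun k => g (N + k)) d := fun k => by
    simpa [add_assoc] using h (N + k) (by omega)
  set n := 2 * d * (N + 1) with hn
  have hNn : N ≤ n := by nlinarith
  have h3n : 3 * n = N + (n - N + 4 * (N + 1) * d) := by
    have : 4 * (N + 1) * d = 2 * n := by ring
    omega
  refine ⟨n, ⟨d * (N + 1), by ring⟩, by positivity, ?_⟩
  rw [h3n]
  simpa [Nat.add_sub_cancel' hNn] using hper.nat_mul (4 * (N + 1)) (n - N)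

lemma paperfold_pow_three_mul_sub_one_mod_two_ne {m p n : ℕ} (hm : 1 ≤ m) (hp : Odd p)
    (hp1 : p ≠ 1) (hn : Even n) (hn0 : n ≠ 0) :
    paperfold m (p ^ (3 * n) - 1) % 2 ≠ paperfold m (p ^ n - 1) % 2 := by
  rw [mul_comm, pow_mul]
  exact paperfold_pow_three_sub_one_mod_two_ne hm (pow_mod_four_of_even hp hn)
    (by simp [hn0, hp1])

theorem paperfold_pow_not_eventually_periodic_general (p m : ℕ) (hp : p.Prime) (hodd : Odd p)
    (hm : 1 ≤ m) :
    (¬ ∃ N d : ℕ, 1 ≤ d ∧ ∀ n : ℕ, N ≤ n →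
        paperfold m (p ^ (n + d) - 1) % 2 = paperfold m (p ^ n - 1) % 2) ∧
    (∀ d N : ℕ, 1 ≤ d → Even d → ∃ n : ℕ, N ≤ n ∧
        ¬ paperfold m (p ^ (n * d) - 1) ≡ paperfold m (p ^ (3 * n * d) - 1) [MOD 2]) := by
  have key (n : ℕ) := paperfold_pow_three_mul_sub_one_mod_two_ne (n := n) hm hodd hp.ne_one
  constructor
  · rintro ⟨N, d, hd, hper⟩
    obtain ⟨n, hn, hn0, h⟩ := exists_even_eq_three_mul_of_eventually_periodic
      (g := fun n => paperfold m (p ^ n - 1) % 2) hd hper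
    exact key n hn hn0 h
  · intro d N hd hde
    refine ⟨N + 1, by omega, fun h => key ((N + 1) * d) (hde.mul_left _) (by positivity) ?_⟩
    rw [← mul_assoc]
    exact h.symm

/-- for `p` an odd prime with `p - 1 = 2^m·x`, `x` odd, the sequence
`n ↦ f_{p^n - 1} mod 2` is not eventually periodic; in particular for every even
period `d ≥ 1` and threshold `N` there is `n ≥ N` with
`f_{p^{nd}-1} ≢ f_{p^{3nd}-1} (mod 2)`. -/
theorem paperfold_pow_not_eventually_periodic (p m x : ℕ) (hp : p.Prime) (hodd : Odd p)
    (hm : 1 ≤ m) (hx : Odd x) (hpx : p - 1 = 2 ^ m * x) :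
    (¬ ∃ N d : ℕ, 1 ≤ d ∧ ∀ n : ℕ, N ≤ n →
        paperfold m (p ^ (n + d) - 1) % 2 = paperfold m (p ^ n - 1) % 2) ∧
    (∀ d N : ℕ, 1 ≤ d → Even d → ∃ n : ℕ, N ≤ n ∧
        ¬ paperfold m (p ^ (n * d) - 1) ≡ paperfold m (p ^ (3 * n * d) - 1) [MOD 2]) :=
  paperfold_pow_not_eventually_periodic_general p m hp hodd hm
end

section
/- Let p be an odd prime, m the 2-adic valuation of p−1, and (f_n) the m-th level paperfolding sequence reduced modulo p (viewed in F_p). Then the formal Laurent series α = Σ_{n=1}^∞ f_n t^{−n} ∈ F_p((t^{−1})) is transcendental over the rational function field F_p(t). -/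
open PowerSeries Finset

namespace PaperfoldAux

variable {p : ℕ} [Fact p.Prime]




/-- agreement of low coefficients is preserved by multiplication -/
lemma coeff_mul_agree {R : Type*} [CommRing R] {n : ℕ} {f g f' g' : R⟦X⟧}
    (hf : ∀ k ≤ n, coeff k f = coeff k f') (hg : ∀ k ≤ n, coeff k g = coeff k g') :
    ∀ k ≤ n, coeff k (f * g) = coeff k (f' * g') := by
  intro k hk
  rw [coeff_mul, coeff_mul]
  refine Finset.sum_congr rfl fun x hx => ?_
  rw [Finset.HasAntidiagonal.mem_antidiagonal] at hx
  rw [hf x.1 (by omega), hg x.2 (by omega)]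

lemma coeff_pow_agree {R : Type*} [CommRing R] {n : ℕ} {f f' : R⟦X⟧}
    (hf : ∀ k ≤ n, coeff k f = coeff k f') (m : ℕ) :
    ∀ k ≤ n, coeff k (f ^ m) = coeff k (f' ^ m) := by
  induction m with
  | zero => simp
  | succ m ih =>
    intro k hk
    rw [pow_succ, pow_succ]
    exact coeff_mul_agree ih hf k hk

lemma coeff_pow_char (f : (ZMod p)⟦X⟧) (n : ℕ) :
    coeff n (f ^ p) = if p ∣ n then coeff (n / p) f else 0 := by
  have hp : 0 < p := (Fact.out : p.Prime).pos
  set P : Polynomial (ZMod p) := trunc (n+1) f with hP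
  have hagree : ∀ k ≤ n, coeff k f = coeff k (P : (ZMod p)⟦X⟧) := by
    intro k hk
    rw [Polynomial.coeff_coe, hP, coeff_trunc]
    simp [Nat.lt_succ_of_le hk]
  have h1 : coeff n (f ^ p) = coeff n ((P : (ZMod p)⟦X⟧) ^ p) :=
    coeff_pow_agree hagree p n le_rfl
  have hPp : P ^ p = Polynomial.expand _ p P := by
    have := Polynomial.map_frobenius_expand (p := p) P
    rw [ZMod.frobenius_zmod] at this
    rw [← this, Polynomial.map_id]
  rw [h1, ← Polynomial.coe_pow, Polynomial.coeff_coe, hPp, Polynomial.coeff_expand hp]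
  split_ifs with h
  · rw [hagree (n / p) (Nat.div_le_self n p), Polynomial.coeff_coe]
  · rfl

/-- the Cartier operator -/
noncomputable def car (p : ℕ) (r : ℕ) (f : (ZMod p)⟦X⟧) : (ZMod p)⟦X⟧ :=
  PowerSeries.mk fun n => coeff (p * n + r) f

lemma coeff_car (r n : ℕ) (f : (ZMod p)⟦X⟧) :
    coeff n (car p r f) = coeff (p * n + r) f := by
  simp [car, coeff_mk]

lemma car_sum {ι : Type*} (r : ℕ) (s : Finset ι) (g : ι → (ZMod p)⟦X⟧) :
    car p r (∑ i ∈ s, g i) = ∑ i ∈ s, car p r (g i) := by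
  ext n
  simp [coeff_car, map_sum]

lemma carrier_aux {p n r c b : ℕ} (hp : 0 < p) (hr : r < p) (hab : p * c + b = p * n + r) :
    c ≤ n ∧ b = p * (n - c) + r := by
  have hc : c ≤ n := by
    by_contra hcn
    have h1 : p * (n + 1) ≤ p * c := Nat.mul_le_mul_left p (by omega)
    have h2 : p * (n + 1) = p * n + p := by ring
    omega
  have h3 : p * (n - c) + p * c = p * n := by rw [← Nat.mul_add, Nat.sub_add_cancel hc]
  exact ⟨hc, by omega⟩

/-- Cartier product rule -/
lemma car_pow_mul {r : ℕ} (hr : r < p) (f g : (ZMod p)⟦X⟧) :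
    car p r (f ^ p * g) = f * car p r g := by
  have hp : 0 < p := (Fact.out : p.Prime).pos
  ext n
  rw [coeff_car, coeff_mul, coeff_mul]
  rw [← Finset.sum_filter_of_ne (s := Finset.HasAntidiagonal.antidiagonal (p * n + r))
      (p := fun x => p ∣ x.1)
      (f := fun x => coeff x.1 (f ^ p) * coeff x.2 g) ?_]
  · refine Finset.sum_nbij' (fun x => (x.1 / p, n - x.1 / p)) (fun y => (p * y.1, p * y.2 + r))
      ?_ ?_ ?_ ?_ ?_
    · rintro ⟨a, b⟩ hx
      simp only [Finset.mem_filter, Finset.HasAntidiagonal.mem_antidiagonal] at hx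
      obtain ⟨hab, c, rfl⟩ := hx
      obtain ⟨hc, -⟩ := carrier_aux hp hr hab
      simp only [Finset.HasAntidiagonal.mem_antidiagonal]
      rw [Nat.mul_div_cancel_left c hp]
      omega
    · rintro ⟨a, b⟩ hy
      simp only [Finset.HasAntidiagonal.mem_antidiagonal] at hy
      simp only [Finset.mem_filter, Finset.HasAntidiagonal.mem_antidiagonal]
      refine ⟨?_, ⟨a, rfl⟩⟩
      have : p * a + (p * b + r) = p * (a + b) + r := by ring
      rw [this, hy]
    · rintro ⟨a, b⟩ hx
      simp only [Finset.mem_filter, Finset.HasAntidiagonal.mem_antidiagonal] at hx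
      obtain ⟨hab, c, rfl⟩ := hx
      obtain ⟨hc, hb⟩ := carrier_aux hp hr hab
      have h1 : p * c / p = c := Nat.mul_div_cancel_left c hp
      simp only [h1]
      rw [hb]
    · rintro ⟨a, b⟩ hy
      simp only [Finset.HasAntidiagonal.mem_antidiagonal] at hy
      have h1 : p * a / p = a := Nat.mul_div_cancel_left a hp
      have h2 : n - a = b := by omega
      simp only [h1, h2]
    · rintro ⟨a, b⟩ hx
      simp only [Finset.mem_filter, Finset.HasAntidiagonal.mem_antidiagonal] at hx
      obtain ⟨hab, c, rfl⟩ := hx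
      obtain ⟨hc, hb⟩ := carrier_aux hp hr hab
      have h1 : p * c / p = c := Nat.mul_div_cancel_left c hp
      rw [coeff_pow_char, if_pos ⟨c, rfl⟩, coeff_car, h1, hb]
  · rintro ⟨a, b⟩ _ hne
    simp only at hne
    by_contra hdvd
    rw [coeff_pow_char, if_neg hdvd, zero_mul] at hne
    exact hne rfl

lemma coeff_pow_pow (f : (ZMod p)⟦X⟧) (e k : ℕ) :
    coeff (p ^ e * k) (f ^ (p ^ e)) = coeff k f := by
  induction e with
  | zero => simp
  | succ e ih =>
    have h1 : f ^ (p ^ (e+1)) = (f ^ (p ^ e)) ^ p := by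
      rw [← pow_mul, pow_succ]
    have h2 : p ^ (e+1) * k = p * (p ^ e * k) := by ring
    rw [h1, h2, coeff_pow_char, if_pos ⟨p ^ e * k, rfl⟩, Nat.mul_div_cancel_left _ (Fact.out : p.Prime).pos]
    exact ih


/-- Cartier operator on polynomials -/
noncomputable def polyCar (p : ℕ) (r : ℕ) (P : Polynomial (ZMod p)) : Polynomial (ZMod p) :=
  ∑ n ∈ Finset.range (P.natDegree + 1), Polynomial.C (P.coeff (p * n + r)) * Polynomial.X ^ n

lemma polyCar_coeff (hp : 0 < p) (r : ℕ) (P : Polynomial (ZMod p)) (n : ℕ) :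
    (polyCar p r P).coeff n = P.coeff (p * n + r) := by
  rw [polyCar, Polynomial.finset_sum_coeff]
  simp only [Polynomial.coeff_C_mul, Polynomial.coeff_X_pow, mul_ite, mul_one, mul_zero]
  rw [Finset.sum_ite_eq (Finset.range (P.natDegree + 1)) n (fun i => P.coeff (p * i + r))]
  split_ifs with h
  · rfl
  · rw [Finset.mem_range, not_lt] at h
    rw [eq_comm, Polynomial.coeff_eq_zero_of_natDegree_lt]
    have : n ≤ p * n := Nat.le_mul_of_pos_left n hp
    omega

lemma coe_polyCar (hp : 0 < p) (r : ℕ) (P : Polynomial (ZMod p)) :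
    ((polyCar p r P : Polynomial (ZMod p)) : (ZMod p)⟦X⟧) = car p r (P : (ZMod p)⟦X⟧) := by
  ext n
  rw [Polynomial.coeff_coe, coeff_car, Polynomial.coeff_coe, polyCar_coeff hp]

lemma polyCar_natDegree_le (hp : 0 < p) {r K : ℕ} {P : Polynomial (ZMod p)}
    (h : P.natDegree < p * (K + 1)) : (polyCar p r P).natDegree ≤ K := by
  rw [Polynomial.natDegree_le_iff_coeff_eq_zero]
  intro m hm
  rw [polyCar_coeff hp]
  apply Polynomial.coeff_eq_zero_of_natDegree_lt
  have : p * (K + 1) ≤ p * m := Nat.mul_le_mul_left p hm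
  omega


-- the finite Λ-stable space
def SSet (p : ℕ) [Fact p.Prime] (β : (ZMod p)⟦X⟧) (t N : ℕ) (A : ℕ → Polynomial (ZMod p)) :
    Set ((ZMod p)⟦X⟧) :=
  {h | ∃ C : ℕ → Polynomial (ZMod p), (∀ i, (C i).natDegree ≤ N) ∧
    ((A 0 : Polynomial (ZMod p)) : (ZMod p)⟦X⟧) * h
      = ∑ i ∈ Finset.range (t + 1), ((C i : Polynomial (ZMod p)) : (ZMod p)⟦X⟧) * β ^ (p ^ i)}

lemma self_mem_SSet (β : (ZMod p)⟦X⟧) (t N : ℕ) (A : ℕ → Polynomial (ZMod p))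
    (hA0deg : (A 0).natDegree ≤ N) : β ∈ SSet p β t N A := by
  refine ⟨fun i => if i = 0 then A 0 else 0, fun i => ?_, ?_⟩
  · by_cases hi : i = 0 <;> simp [hi, hA0deg]
  · rw [Finset.sum_eq_single 0]
    · simp
    · intro i _ hi
      simp [hi]
    · intro hmem
      exact absurd (Finset.mem_range.mpr (Nat.succ_pos t)) hmem

lemma car_mem_SSet (β : (ZMod p)⟦X⟧) (t N : ℕ) (A : ℕ → Polynomial (ZMod p))
    (hAdeg : ∀ j, (A j).natDegree ≤ N)
    (hrel : ∑ j ∈ Finset.range (t + 2),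
      ((A j : Polynomial (ZMod p)) : (ZMod p)⟦X⟧) * β ^ (p ^ j) = 0)
    {h : (ZMod p)⟦X⟧} (hh : h ∈ SSet p β t N A) {r : ℕ} (hr : r < p) :
    car p r h ∈ SSet p β t N A := by
  classical
  have hp : 0 < p := (Fact.out : p.Prime).pos
  have hp2 : 2 ≤ p := (Fact.out : p.Prime).two_le
  obtain ⟨C, hC, hEq⟩ := hh
  -- the new numerator polynomials
  set E : ℕ → Polynomial (ZMod p) :=
    fun j => A 0 ^ (p - 1) * (if 1 ≤ j ∧ j ≤ t then C j else 0) - A 0 ^ (p - 2) * C 0 * A j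
    with hEdef
  have hrel' : ∑ j ∈ Finset.range (t + 1),
      ((A (j+1) : Polynomial (ZMod p)) : (ZMod p)⟦X⟧) * β ^ (p ^ (j+1))
      = -(((A 0 : Polynomial (ZMod p)) : (ZMod p)⟦X⟧) * β) := by
    have h0 := hrel
    rw [Finset.sum_range_succ'] at h0
    simp only [pow_zero, pow_one] at h0
    exact eq_neg_of_add_eq_zero_left h0
  have hpowsplit : ∀ (u : (ZMod p)⟦X⟧), u ^ p = u ^ (p - 2) * u * u := by
    intro u
    rw [mul_assoc, ← pow_two, ← pow_add]
    congr 1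
    omega
  have hpowsplit1 : ∀ (u : (ZMod p)⟦X⟧), u ^ (p - 1) = u ^ (p - 2) * u := by
    intro u
    rw [← pow_succ]
    congr 1
    omega
  have key : ((A 0 : Polynomial (ZMod p)) : (ZMod p)⟦X⟧) ^ p * h
      = ∑ j ∈ Finset.range (t + 1),
          ((E (j+1) : Polynomial (ZMod p)) : (ZMod p)⟦X⟧) * β ^ (p ^ (j+1)) := by
    have lhs1 : ((A 0 : Polynomial (ZMod p)) : (ZMod p)⟦X⟧) ^ p * h
        = ((A 0 : Polynomial (ZMod p)) : (ZMod p)⟦X⟧) ^ (p - 1) *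
            (∑ i ∈ Finset.range (t + 1), ((C i : Polynomial (ZMod p)) : (ZMod p)⟦X⟧) * β ^ (p ^ i)) := by
      rw [← hEq, hpowsplit1, hpowsplit]
      ring
    rw [lhs1, Finset.mul_sum, Finset.sum_range_succ']
    simp only [pow_zero, pow_one]
    -- separate the target sum
    have rhs1 : ∀ j ∈ Finset.range (t + 1),
        ((E (j+1) : Polynomial (ZMod p)) : (ZMod p)⟦X⟧) * β ^ (p ^ (j+1))
        = ((A 0 : Polynomial (ZMod p)) : (ZMod p)⟦X⟧) ^ (p - 1) *
            (if 1 ≤ j+1 ∧ j+1 ≤ t then ((C (j+1) : Polynomial (ZMod p)) : (ZMod p)⟦X⟧) else 0) * β ^ (p ^ (j+1))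
          - ((A 0 : Polynomial (ZMod p)) : (ZMod p)⟦X⟧) ^ (p - 2)
            * ((C 0 : Polynomial (ZMod p)) : (ZMod p)⟦X⟧)
            * (((A (j+1) : Polynomial (ZMod p)) : (ZMod p)⟦X⟧) * β ^ (p ^ (j+1))) := by
      intro j _
      rw [hEdef]
      simp only [Polynomial.coe_sub, Polynomial.coe_mul, Polynomial.coe_pow,
        apply_ite (fun q : Polynomial (ZMod p) => (q : (ZMod p)⟦X⟧)), Polynomial.coe_zero]
      ring
    rw [Finset.sum_congr rfl rhs1, Finset.sum_sub_distrib, ← Finset.mul_sum, ← Finset.mul_sum, hrel']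
    have first : ∑ j ∈ Finset.range (t + 1),
        ((A 0 : Polynomial (ZMod p)) : (ZMod p)⟦X⟧) ^ (p - 1) *
            (if 1 ≤ j+1 ∧ j+1 ≤ t then ((C (j+1) : Polynomial (ZMod p)) : (ZMod p)⟦X⟧) else 0) * β ^ (p ^ (j+1))
        = ∑ i ∈ Finset.range t,
            ((A 0 : Polynomial (ZMod p)) : (ZMod p)⟦X⟧) ^ (p - 1) *
              (((C (i+1) : Polynomial (ZMod p)) : (ZMod p)⟦X⟧) * β ^ (p ^ (i+1))) := by
      rw [Finset.sum_range_succ]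
      have hzero : ¬ (1 ≤ t + 1 ∧ t + 1 ≤ t) := by omega
      rw [if_neg hzero]
      simp only [mul_zero, zero_mul, add_zero]
      refine Finset.sum_congr rfl fun i hi => ?_
      rw [Finset.mem_range] at hi
      rw [if_pos ⟨by omega, by omega⟩]
      ring
    rw [first, hpowsplit1, Finset.mul_sum]
    ring
  -- apply the Cartier operator
  have key2 : ((A 0 : Polynomial (ZMod p)) : (ZMod p)⟦X⟧) * car p r h
      = ∑ j ∈ Finset.range (t + 1),
          ((polyCar p r (E (j+1)) : Polynomial (ZMod p)) : (ZMod p)⟦X⟧) * β ^ (p ^ j) := by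
    have hcar := congrArg (car p r) key
    rw [car_pow_mul hr] at hcar
    rw [hcar, car_sum]
    refine Finset.sum_congr rfl fun j _ => ?_
    have hterm : ((E (j+1) : Polynomial (ZMod p)) : (ZMod p)⟦X⟧) * β ^ (p ^ (j+1))
        = (β ^ (p ^ j)) ^ p * ((E (j+1) : Polynomial (ZMod p)) : (ZMod p)⟦X⟧) := by
      rw [← pow_mul, ← pow_succ]
      ring
    rw [hterm, car_pow_mul hr, coe_polyCar hp]
    ring
  -- degree bound for the new coefficients
  have hdeg : ∀ j, (polyCar p r (E (j+1))).natDegree ≤ N := by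
    intro j
    apply polyCar_natDegree_le hp
    have h1 : (A 0 ^ (p - 1) * (if 1 ≤ j+1 ∧ j+1 ≤ t then C (j+1) else 0)).natDegree ≤ (p-1) * N + N := by
      apply le_trans (Polynomial.natDegree_mul_le)
      gcongr
      · exact le_trans (Polynomial.natDegree_pow_le) (by gcongr; exact hAdeg 0)
      · split
        · exact hC _
        · simp
    have h2 : (A 0 ^ (p - 2) * C 0 * A (j+1)).natDegree ≤ ((p-2) * N + N) + N := by
      apply le_trans (Polynomial.natDegree_mul_le)
      gcongr
      · apply le_trans (Polynomial.natDegree_mul_le)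
        gcongr
        · exact le_trans (Polynomial.natDegree_pow_le) (by gcongr; exact hAdeg 0)
        · exact hC 0
      · exact hAdeg (j+1)
    have h3 : (E (j+1)).natDegree ≤ p * N := by
      rw [hEdef]
      apply le_trans (Polynomial.natDegree_sub_le _ _)
      have e1 : (p-1) * N + N ≤ p * N := by
        have : (p-1) * N + N = ((p-1)+1) * N := by ring
        rw [this]
        gcongr
        omega
      have e2 : ((p-2) * N + N) + N ≤ p * N := by
        have : ((p-2) * N + N) + N = ((p-2)+2) * N := by ring
        rw [this]
        gcongr
        omega
      exact max_le (le_trans h1 e1) (le_trans h2 e2)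
    calc (E (j+1)).natDegree ≤ p * N := h3
      _ < p * (N + 1) := by
          have : p * (N+1) = p * N + p := by ring
          omega
  exact ⟨fun i => polyCar p r (E (i+1)), hdeg, key2⟩

-- finiteness of SSet
lemma SSet_finite (β : (ZMod p)⟦X⟧) (t N : ℕ) (A : ℕ → Polynomial (ZMod p)) (hA0 : A 0 ≠ 0) :
    (SSet p β t N A).Finite := by
  classical
  have hfin : Finite (Fin (t+1) → Polynomial.degreeLT (ZMod p) (N+1)) := by
    have : Finite (Polynomial.degreeLT (ZMod p) (N+1)) :=
      Finite.of_equiv _ (Polynomial.degreeLTEquiv (ZMod p) (N+1)).symm.toEquiv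
    infer_instance
  rw [← Set.finite_coe_iff]
  have memLT : ∀ (P : Polynomial (ZMod p)), P.natDegree ≤ N → P ∈ Polynomial.degreeLT (ZMod p) (N+1) := by
    intro P hP
    rw [Polynomial.mem_degreeLT]
    calc P.degree ≤ (P.natDegree : WithBot ℕ) := Polynomial.degree_le_natDegree
      _ < ((N+1 : ℕ) : WithBot ℕ) := by exact_mod_cast Nat.lt_succ_of_le hP
  let F : (SSet p β t N A) → (Fin (t+1) → Polynomial.degreeLT (ZMod p) (N+1)) :=
    fun h => fun i => ⟨(h.2.choose) i, memLT _ (h.2.choose_spec.1 i)⟩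
  apply Finite.of_injective F
  intro h₁ h₂ hF
  have hsum : ∑ i ∈ Finset.range (t + 1),
        ((h₁.2.choose i : Polynomial (ZMod p)) : (ZMod p)⟦X⟧) * β ^ (p ^ i)
      = ∑ i ∈ Finset.range (t + 1),
        ((h₂.2.choose i : Polynomial (ZMod p)) : (ZMod p)⟦X⟧) * β ^ (p ^ i) := by
    refine Finset.sum_congr rfl fun i hi => ?_
    rw [Finset.mem_range] at hi
    have := congrFun hF ⟨i, hi⟩
    have hCC : h₁.2.choose i = h₂.2.choose i := congrArg Subtype.val this
    rw [hCC]
  have e1 := h₁.2.choose_spec.2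
  have e2 := h₂.2.choose_spec.2
  rw [hsum, ← e2] at e1
  have hB0 : ((A 0 : Polynomial (ZMod p)) : (ZMod p)⟦X⟧) ≠ 0 := by
    simpa [Polynomial.coe_eq_zero_iff] using hA0
  exact Subtype.ext (mul_left_cancel₀ hB0 e1)

-- decimation operators
noncomputable def dec (p : ℕ) (k r : ℕ) (f : (ZMod p)⟦X⟧) : (ZMod p)⟦X⟧ :=
  PowerSeries.mk fun n => coeff (p ^ k * n + r) f

lemma coeff_dec (k r n : ℕ) (f : (ZMod p)⟦X⟧) :
    coeff n (dec p k r f) = coeff (p ^ k * n + r) f := by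
  simp [dec, coeff_mk]

lemma dec_mem (V : Set ((ZMod p)⟦X⟧)) (β : (ZMod p)⟦X⟧) (hβ : β ∈ V)
    (hstab : ∀ h ∈ V, ∀ r < p, car p r h ∈ V) :
    ∀ k r, r < p ^ k → dec p k r β ∈ V := by
  have hp : 0 < p := (Fact.out : p.Prime).pos
  intro k
  induction k with
  | zero =>
    intro r hr
    have hr0 : r = 0 := by
      rw [pow_zero] at hr
      omega
    subst hr0
    have : dec p 0 0 β = β := by
      ext n
      simp [coeff_dec]
    rwa [this]
  | succ k ih =>
    intro r hr
    have hpk : 0 < p ^ k := Nat.pow_pos (n := k) hp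
    have hstep : dec p (k+1) r β = car p (r / p ^ k) (dec p k (r % p ^ k) β) := by
      ext n
      rw [coeff_car, coeff_dec, coeff_dec]
      congr 1
      have hdm : p ^ k * (r / p ^ k) + r % p ^ k = r := Nat.div_add_mod r (p ^ k)
      rw [show p ^ k * (p * n + r / p ^ k) + r % p ^ k
          = p ^ (k+1) * n + (p ^ k * (r / p ^ k) + r % p ^ k) from by ring, hdm]
    rw [hstep]
    apply hstab _ (ih _ (Nat.mod_lt r hpk))
    rw [Nat.div_lt_iff_lt_mul hpk]
    calc r < p ^ (k+1) := hr
      _ = p * p ^ k := by ring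
  



lemma oddPart_two_pow_mul (s k : ℕ) (hk : Odd k) : oddPart (2 ^ s * k) = k := by
  have hk1 := Nat.odd_iff.mp hk
  have hk0 : k ≠ 0 := by omega
  have h2 : ¬ (2 ∣ k) := by omega
  have hfact : (2 ^ s * k).factorization 2 = s := by
    rw [Nat.factorization_mul (by positivity) hk0]
    rw [Finsupp.add_apply, Nat.Prime.factorization_pow Nat.prime_two,
      Finsupp.single_eq_same, Nat.factorization_eq_zero_of_not_dvd h2]
    omega
  rw [oddPart, hfact, Nat.mul_div_cancel_left _ (by positivity)]

lemma paperfold_two_pow_mul (m s K : ℕ) : paperfold m (2 ^ s * (2 * K + 1)) = K % 2 ^ m := by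
  rw [paperfold, oddPart_two_pow_mul s _ (by exact ⟨K, by ring⟩)]
  have h1 : 2 * K + 1 - 1 = 2 * K := by omega
  have h2 : 2 ^ (m + 1) = 2 * 2 ^ m := by rw [pow_succ]; ring
  rw [h1, h2, Nat.mul_mod_mul_left, Nat.mul_div_cancel_left _ (by norm_num)]

lemma pow_mod_two_pow {p m x j : ℕ} (hp : p = 2 ^ m * x + 1) : p ^ j % 2 ^ m = 1 % 2 ^ m := by
  have h1 : p ≡ 1 [MOD 2 ^ m] := by
    have : (2 : ℕ) ^ m ∣ p - 1 := by rw [hp]; simp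
    exact (Nat.modEq_iff_dvd' (by omega)).mpr this |>.symm
  have h3 := h1.pow j
  rw [one_pow] at h3
  exact h3

lemma paperfold_val1 {p m x : ℕ} (hm : 1 ≤ m) (hp : p = 2 ^ m * x + 1) (s : ℕ) :
    paperfold m (p ^ s * 2 ^ (s + 1) + 2 ^ s) = 1 := by
  have hidx : p ^ s * 2 ^ (s + 1) + 2 ^ s = 2 ^ s * (2 * p ^ s + 1) := by ring
  rw [hidx, paperfold_two_pow_mul, pow_mod_two_pow hp]
  have : (2:ℕ) ^ m > 1 := by
    calc (1:ℕ) < 2 ^ 1 := by norm_num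
    _ ≤ 2 ^ m := Nat.pow_le_pow_right (by norm_num) hm
  exact Nat.mod_eq_of_lt this

lemma paperfold_val2 {p m x s s' : ℕ} (hp : p = 2 ^ m * x + 1) (hss : s' < s) :
    paperfold m (p ^ s' * 2 ^ (s + 1) + 2 ^ s') = 2 ^ (s - s') % 2 ^ m := by
  have hidx : p ^ s' * 2 ^ (s + 1) + 2 ^ s' = 2 ^ s' * (2 * (2 ^ (s - s') * p ^ s') + 1) := by
    have h1 : (2:ℕ) ^ (s + 1) = 2 ^ (s - s') * 2 * 2 ^ s' := by
      rw [mul_assoc, ← pow_succ', ← pow_add]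
      congr 1
      omega
    rw [h1]
    ring
  rw [hidx, paperfold_two_pow_mul]
  have h1 : (2:ℕ) ^ (s - s') * p ^ s' ≡ 2 ^ (s - s') * 1 [MOD 2 ^ m] := by
    apply Nat.ModEq.mul_left
    have h2 : p ≡ 1 [MOD 2 ^ m] := by
      have : (2 : ℕ) ^ m ∣ p - 1 := by rw [hp]; simp
      exact (Nat.modEq_iff_dvd' (by omega)).mpr this |>.symm
    simpa using h2.pow s'
  have := h1
  unfold Nat.ModEq at this
  rw [this, mul_one]

lemma val2_props {m d : ℕ} (hm : 1 ≤ m) (hd : 1 ≤ d) :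
    2 ^ d % 2 ^ m ≠ 1 ∧ 2 ^ d % 2 ^ m < 2 ^ m := by
  constructor
  · rcases Nat.lt_or_ge d m with h | h
    · rw [Nat.mod_eq_of_lt (Nat.pow_lt_pow_right (by norm_num) h)]
      have : (2:ℕ)^1 ≤ 2^d := Nat.pow_le_pow_right (by norm_num) hd
      have h2 : (2:ℕ)^d = 2 * 2^(d-1) := by
        rw [← pow_succ']
        congr 1
        omega
      omega
    · have hdvd : (2:ℕ)^m ∣ 2^d := pow_dvd_pow 2 h
      have h0 : (2:ℕ)^d % 2^m = 0 := Nat.mod_eq_zero_of_dvd hdvd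
      omega
  · exact Nat.mod_lt _ (by positivity)



end PaperfoldAux

open PaperfoldAux

open scoped RatFunc

set_option maxHeartbeats 2000000 in
set_option synthInstance.maxHeartbeats 400000 in
/-- for `p` an odd prime with `2`-adic valuation `m` of `p - 1`,
the Laurent series `α = Σ_{n≥1} f_n t^{-n}` (with `X = t⁻¹`, so `α = Σ f_n Xⁿ`
in `F_p((X))`) is transcendental over the rational function field `F_p(t) = F_p(X)`. -/
theorem paperfold_series_transcendental (p m x : ℕ) [Fact p.Prime] (hodd : Odd p)
    (hm : 1 ≤ m) (hx : Odd x) (hpx : p - 1 = 2 ^ m * x) :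
    Transcendental (RatFunc (ZMod p))
      ((PowerSeries.mk (fun n => if n = 0 then 0 else (paperfold m n : ZMod p)) :
          PowerSeries (ZMod p)) : LaurentSeries (ZMod p)) := by
  classical
  intro halg
  have hpPrime : p.Prime := Fact.out
  have hp2 : 2 ≤ p := hpPrime.two_le
  have hp3 : 3 ≤ p := by
    rcases hodd with ⟨y, hy⟩
    omega
  have hx1 : 1 ≤ x := by
    rcases hx with ⟨y, hy⟩
    omega
  have hpeq : p = 2 ^ m * x + 1 := by omega
  have h2mp : 2 ^ m < p := by
    have : 2 ^ m * 1 ≤ 2 ^ m * x := by gcongr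
    omega
  set a : ℕ → ZMod p := fun n => if n = 0 then 0 else (paperfold m n : ZMod p) with ha
  set α₀ : PowerSeries (ZMod p) := PowerSeries.mk a with hα₀
  -- α₀ is nonzero (its coefficient at 3 is 1)
  have hcoeff3 : PowerSeries.coeff 3 α₀ = 1 := by
    rw [hα₀, PowerSeries.coeff_mk]
    show (if (3:ℕ) = 0 then (0:ZMod p) else ((paperfold m 3 : ℕ) : ZMod p)) = 1
    have h3 : (3:ℕ) = 2 ^ 0 * (2 * 1 + 1) := by norm_num
    rw [if_neg (by norm_num), h3, paperfold_two_pow_mul]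
    have : (1:ℕ) % 2 ^ m = 1 := Nat.mod_eq_of_lt (by
      calc (1:ℕ) < 2 ^ 1 := by norm_num
      _ ≤ 2 ^ m := Nat.pow_le_pow_right (by norm_num) hm)
    rw [this]
    norm_num
  have hα₀ne : α₀ ≠ 0 := by
    intro h0
    rw [h0] at hcoeff3
    simp at hcoeff3
  -- Step A: a Frobenius-power linear relation with polynomial coefficients
  have hint : IsIntegral (RatFunc (ZMod p)) ((α₀ : PowerSeries (ZMod p)) : LaurentSeries (ZMod p)) :=
    halg.isIntegral
  set A' := Algebra.adjoin (RatFunc (ZMod p))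
    ({((α₀ : PowerSeries (ZMod p)) : LaurentSeries (ZMod p))} : Set (LaurentSeries (ZMod p))) with hA'
  have hfg : (Subalgebra.toSubmodule A').FG := hint.fg_adjoin_singleton
  haveI hmf : Module.Finite (RatFunc (ZMod p)) A' := Module.Finite.iff_fg.mpr hfg
  set d := Module.finrank (RatFunc (ZMod p)) A' with hd
  have hmemA : ∀ i : ℕ, ((α₀ : PowerSeries (ZMod p)) : LaurentSeries (ZMod p)) ^ (p ^ i) ∈ A' :=
    fun i => pow_mem (Algebra.self_mem_adjoin_singleton (RatFunc (ZMod p)) _) _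
  have hnli : ¬ LinearIndependent (RatFunc (ZMod p))
      (fun i : Fin (d+1) =>
        (⟨((α₀ : PowerSeries (ZMod p)) : LaurentSeries (ZMod p)) ^ (p ^ (i:ℕ)), hmemA i⟩ : A')) := by
    intro hli
    have := hli.fintype_card_le_finrank
    simp only [Fintype.card_fin] at this
    omega
  obtain ⟨g, hgsum, i₀, hgi⟩ := Fintype.not_linearIndependent_iff.mp hnli
  have hsumL : ∑ i : Fin (d+1),
      algebraMap (RatFunc (ZMod p)) (LaurentSeries (ZMod p)) (g i) *
        (((α₀ : PowerSeries (ZMod p)) : LaurentSeries (ZMod p)) ^ (p ^ (i:ℕ))) = 0 := by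
    have h1 := congrArg (Subtype.val) hgsum
    simp only [AddSubmonoidClass.coe_finset_sum, SetLike.val_smul, Algebra.smul_def,
      ZeroMemClass.coe_zero] at h1
    exact h1
  -- clear denominators
  obtain ⟨b, hb⟩ := IsLocalization.exist_integer_multiples
    (nonZeroDivisors (Polynomial (ZMod p))) Finset.univ g
  choose B hB using fun i : Fin (d+1) => hb i (Finset.mem_univ i)
  have hbne : (b : Polynomial (ZMod p)) ≠ 0 := nonZeroDivisors.coe_ne_zero b
  have hinj : Function.Injective (algebraMap (Polynomial (ZMod p)) (RatFunc (ZMod p))) :=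
    IsFractionRing.injective _ _
  have hBne : B i₀ ≠ 0 := by
    intro h0
    have h1 := hB i₀
    rw [h0, map_zero] at h1
    have h2 : algebraMap (Polynomial (ZMod p)) (RatFunc (ZMod p)) (b : Polynomial (ZMod p)) ≠ 0 := by
      rw [map_ne_zero_iff _ hinj]
      exact hbne
    have h3 : (b : Polynomial (ZMod p)) • g i₀ =
        algebraMap (Polynomial (ZMod p)) (RatFunc (ZMod p)) (b : Polynomial (ZMod p)) * g i₀ :=
      Algebra.smul_def _ _
    rw [h3] at h1
    exact hgi (by
      rcases mul_eq_zero.mp h1.symm with h | h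
      · exact absurd h h2
      · exact h)
  have hsum2 : ∑ i : Fin (d+1),
      algebraMap (Polynomial (ZMod p)) (LaurentSeries (ZMod p)) (B i) *
        (((α₀ : PowerSeries (ZMod p)) : LaurentSeries (ZMod p)) ^ (p ^ (i:ℕ))) = 0 := by
    have hcast : ∀ i : Fin (d+1),
        algebraMap (Polynomial (ZMod p)) (LaurentSeries (ZMod p)) (B i)
        = algebraMap (RatFunc (ZMod p)) (LaurentSeries (ZMod p))
            (algebraMap (Polynomial (ZMod p)) (RatFunc (ZMod p)) (b : Polynomial (ZMod p)))
          * algebraMap (RatFunc (ZMod p)) (LaurentSeries (ZMod p)) (g i) := by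
      intro i
      rw [IsScalarTower.algebraMap_apply (Polynomial (ZMod p)) (RatFunc (ZMod p))
        (LaurentSeries (ZMod p)), hB i, Algebra.smul_def, map_mul]
    calc ∑ i : Fin (d+1),
        algebraMap (Polynomial (ZMod p)) (LaurentSeries (ZMod p)) (B i) *
          (((α₀ : PowerSeries (ZMod p)) : LaurentSeries (ZMod p)) ^ (p ^ (i:ℕ)))
        = algebraMap (RatFunc (ZMod p)) (LaurentSeries (ZMod p))
            (algebraMap (Polynomial (ZMod p)) (RatFunc (ZMod p)) (b : Polynomial (ZMod p)))
          * ∑ i : Fin (d+1),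
            algebraMap (RatFunc (ZMod p)) (LaurentSeries (ZMod p)) (g i) *
              (((α₀ : PowerSeries (ZMod p)) : LaurentSeries (ZMod p)) ^ (p ^ (i:ℕ))) := by
          rw [Finset.mul_sum]
          refine Finset.sum_congr rfl fun i _ => ?_
          rw [hcast i]
          ring
      _ = 0 := by rw [hsumL, mul_zero]
  -- descend to power series
  have hcastP : ∀ P : Polynomial (ZMod p),
      algebraMap (Polynomial (ZMod p)) (LaurentSeries (ZMod p)) P
        = ((P : PowerSeries (ZMod p)) : LaurentSeries (ZMod p)) := by
    intro P
    rw [RatFunc.coe_coe, IsScalarTower.algebraMap_apply (Polynomial (ZMod p)) (RatFunc (ZMod p))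
      (LaurentSeries (ZMod p))]
    rfl
  have hrelPS : ∑ i : Fin (d+1),
      ((B i : Polynomial (ZMod p)) : PowerSeries (ZMod p)) * α₀ ^ (p ^ (i:ℕ)) = 0 := by
    apply HahnSeries.ofPowerSeries_injective (Γ := ℤ) (R := ZMod p)
    rw [map_sum, map_zero]
    rw [← hsum2]
    refine Finset.sum_congr rfl fun i _ => ?_
    rw [map_mul, map_pow, hcastP]
  -- restate over ℕ
  set Bn : ℕ → Polynomial (ZMod p) := fun i => if h : i < d + 1 then B ⟨i, h⟩ else 0 with hBn
  have hrelN : ∑ i ∈ Finset.range (d+1),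
      ((Bn i : Polynomial (ZMod p)) : PowerSeries (ZMod p)) * α₀ ^ (p ^ i) = 0 := by
    rw [Finset.sum_range]
    rw [← hrelPS]
    refine Finset.sum_congr rfl fun i _ => ?_
    have hBni : Bn (i : ℕ) = B i := by
      simp only [hBn]
      rw [dif_pos i.isLt]
    rw [hBni]
  have hex : ∃ i, Bn i ≠ 0 := by
    refine ⟨i₀, ?_⟩
    have hBni : Bn (i₀ : ℕ) = B i₀ := by
      simp only [hBn]
      rw [dif_pos i₀.isLt]
    rw [hBni]
    exact hBne
  set i0 := Nat.find hex with hi0def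
  have hi0ne : Bn i0 ≠ 0 := Nat.find_spec hex
  have hi0min : ∀ j, j < i0 → Bn j = 0 := fun j hj => of_not_not (Nat.find_min hex hj)
  have hi0le : i0 ≤ d := by
    by_contra hcon
    apply hi0ne
    simp only [hBn]
    rw [dif_neg (by omega)]
  set β := α₀ ^ (p ^ i0) with hβ
  set A : ℕ → Polynomial (ZMod p) := fun j => Bn (i0 + j) with hA
  set tt := d - i0 with htt
  have hApow : ∀ j, α₀ ^ (p ^ (i0 + j)) = β ^ (p ^ j) := by
    intro j
    rw [hβ, ← pow_mul, ← pow_add]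
  have hrelA : ∑ j ∈ Finset.range (tt + 1),
      ((A j : Polynomial (ZMod p)) : PowerSeries (ZMod p)) * β ^ (p ^ j) = 0 := by
    have hsplit : ∑ i ∈ Finset.range (d+1),
        ((Bn i : Polynomial (ZMod p)) : PowerSeries (ZMod p)) * α₀ ^ (p ^ i)
        = ∑ i ∈ Finset.Ico i0 (d+1),
          ((Bn i : Polynomial (ZMod p)) : PowerSeries (ZMod p)) * α₀ ^ (p ^ i) := by
      rw [Finset.range_eq_Ico, ← Finset.sum_Ico_consecutive _ (Nat.zero_le i0) (by omega)]
      have hz : ∑ i ∈ Finset.Ico 0 i0,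
          ((Bn i : Polynomial (ZMod p)) : PowerSeries (ZMod p)) * α₀ ^ (p ^ i) = 0 :=
        Finset.sum_eq_zero fun i hi => by
          rw [Finset.mem_Ico] at hi
          rw [hi0min i hi.2, Polynomial.coe_zero, zero_mul]
      rw [hz, zero_add]
    have h2 : ∑ i ∈ Finset.Ico i0 (d+1),
        ((Bn i : Polynomial (ZMod p)) : PowerSeries (ZMod p)) * α₀ ^ (p ^ i)
        = ∑ j ∈ Finset.range (tt + 1),
          ((Bn (i0 + j) : Polynomial (ZMod p)) : PowerSeries (ZMod p)) * α₀ ^ (p ^ (i0 + j)) := by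
      rw [Finset.sum_Ico_eq_sum_range]
      rw [(by omega : d + 1 - i0 = tt + 1)]
    calc ∑ j ∈ Finset.range (tt + 1),
        ((A j : Polynomial (ZMod p)) : PowerSeries (ZMod p)) * β ^ (p ^ j)
        = ∑ j ∈ Finset.range (tt + 1),
          ((Bn (i0 + j) : Polynomial (ZMod p)) : PowerSeries (ZMod p)) * α₀ ^ (p ^ (i0 + j)) := by
          refine Finset.sum_congr rfl fun j _ => ?_
          rw [hA, hApow]
      _ = ∑ i ∈ Finset.Ico i0 (d+1),
          ((Bn i : Polynomial (ZMod p)) : PowerSeries (ZMod p)) * α₀ ^ (p ^ i) := h2.symm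
      _ = ∑ i ∈ Finset.range (d+1),
          ((Bn i : Polynomial (ZMod p)) : PowerSeries (ZMod p)) * α₀ ^ (p ^ i) := hsplit.symm
      _ = 0 := hrelN
  have hA0ne : A 0 ≠ 0 := by
    rw [hA]
    simpa using hi0ne
  have hβne : β ≠ 0 := by
    rw [hβ]
    exact pow_ne_zero _ hα₀ne
  rcases Nat.eq_zero_or_pos tt with htt0 | httpos
  · -- degenerate case: single-term relation forces β = 0
    rw [htt0] at hrelA
    have h1 : ((A 0 : Polynomial (ZMod p)) : PowerSeries (ZMod p)) * β ^ (p ^ 0) = 0 := by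
      simpa using hrelA
    rcases mul_eq_zero.mp h1 with h | h
    · exact hA0ne (Polynomial.coe_eq_zero_iff.mp h)
    · rw [pow_zero, pow_one] at h
      exact hβne h
  · set t := tt - 1 with ht
    have hrelM : ∑ j ∈ Finset.range (t + 2),
        ((A j : Polynomial (ZMod p)) : PowerSeries (ZMod p)) * β ^ (p ^ j) = 0 := by
      rw [(by omega : t + 2 = tt + 1)]
      exact hrelA
    set N := Finset.sup (Finset.range (tt + 1)) (fun j => (A j).natDegree) with hN
    have hAdeg : ∀ j, (A j).natDegree ≤ N := by
      intro j
      rcases Nat.lt_or_ge j (tt + 1) with hj | hj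
      · exact Finset.le_sup (f := fun j => (A j).natDegree) (Finset.mem_range.mpr hj)
      · have hz : A j = 0 := by
          simp only [hA, hBn]
          rw [dif_neg (by omega)]
        rw [hz]
        simp
    have hfin := SSet_finite β t N A hA0ne
    have hbase := self_mem_SSet β t N A (hAdeg 0)
    have hdec : ∀ k r, r < p ^ k → dec p k r β ∈ SSet p β t N A :=
      dec_mem _ β hbase (fun h hh r hr => car_mem_SSet β t N A hAdeg hrelM hh hr)
    have hmem : ∀ u : ℕ, 1 ≤ u → dec p (u + i0) (2 ^ u * p ^ i0) β ∈ SSet p β t N A := by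
      intro u hu
      apply hdec
      have h2p : 2 ^ u < p ^ u := Nat.pow_lt_pow_left (by omega) (by omega)
      calc 2 ^ u * p ^ i0 < p ^ u * p ^ i0 := by
            have h0 : (0:ℕ) < p ^ i0 := by positivity
            exact mul_lt_mul_of_pos_right h2p h0
        _ = p ^ (u + i0) := by rw [← pow_add]
    have hcoeffdec : ∀ u n : ℕ, PowerSeries.coeff n (dec p (u + i0) (2 ^ u * p ^ i0) β)
        = a (p ^ u * n + 2 ^ u) := by
      intro u n
      rw [coeff_dec, hβ]
      have hidx : p ^ (u + i0) * n + 2 ^ u * p ^ i0 = p ^ i0 * (p ^ u * n + 2 ^ u) := by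
        rw [pow_add]
        ring
      rw [hidx, coeff_pow_pow, hα₀, PowerSeries.coeff_mk]
    have hkey : ∀ u u' : ℕ, 1 ≤ u' → u' < u →
        dec p (u + i0) (2 ^ u * p ^ i0) β ≠ dec p (u' + i0) (2 ^ u' * p ^ i0) β := by
      intro u u' hu' huu hEq
      have h1 := congrArg (PowerSeries.coeff (2 ^ (u + 1))) hEq
      rw [hcoeffdec, hcoeffdec] at h1
      simp only [ha] at h1
      have hpos1 : (0:ℕ) < 2 ^ u := by positivity
      have hpos2 : (0:ℕ) < 2 ^ u' := by positivity
      rw [if_neg (by omega), if_neg (by omega)] at h1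
      rw [paperfold_val1 hm hpeq u, paperfold_val2 hpeq huu] at h1
      obtain ⟨hne1, hlt⟩ := val2_props (d := u - u') hm (by omega)
      rw [ZMod.natCast_eq_natCast_iff'] at h1
      rw [Nat.mod_eq_of_lt (by omega), Nat.mod_eq_of_lt (by omega)] at h1
      exact hne1 h1.symm
    haveI : Finite (SSet p β t N A) := hfin.to_subtype
    obtain ⟨s1, s2, hne, heq⟩ := Finite.exists_ne_map_eq_of_infinite
      (fun s : ℕ => (⟨dec p (s + 1 + i0) (2 ^ (s + 1) * p ^ i0) β,
        hmem (s + 1) (by omega)⟩ : SSet p β t N A))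
    have heq' : dec p (s1 + 1 + i0) (2 ^ (s1 + 1) * p ^ i0) β
        = dec p (s2 + 1 + i0) (2 ^ (s2 + 1) * p ^ i0) β := congrArg Subtype.val heq
    rcases Nat.lt_or_ge s1 s2 with h | h
    · exact hkey (s2 + 1) (s1 + 1) (by omega) (by omega) heq'.symm
    · exact hkey (s1 + 1) (s2 + 1) (by omega) (by omega) heq'
end

section
/- Let F be a finite field of odd characteristic, F(t) the rational function field, and L = F(t)(β) where β² = 1 + t^{−1}. An element θ = j + kβ of L (with j, k ∈ F(t)) is integral over F[t] if and only if j ∈ F[t] and k ∈ t·F[t]. Consequently the integral closure of F[t] in L is F[t, tβ]. -/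
open Polynomial

lemma hu_aux (F : Type*) [Field F] :
    (1 + RatFunc.X⁻¹ : RatFunc F) =
      algebraMap (Polynomial F) (RatFunc F) (X + 1) / algebraMap (Polynomial F) (RatFunc F) X := by
  have hX0 : (RatFunc.X : RatFunc F) ≠ 0 := RatFunc.X_ne_zero
  rw [map_add, map_one, RatFunc.algebraMap_X, add_div, div_self hX0, one_div]

lemma key_div (F : Type*) [Field F] {k : RatFunc F} {M : Polynomial F}
    (h : k ^ 2 * (1 + RatFunc.X⁻¹) = algebraMap (Polynomial F) (RatFunc F) M) :
    ∃ Q : Polynomial F, k = RatFunc.X * algebraMap (Polynomial F) (RatFunc F) Q := by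
  set φ := algebraMap (Polynomial F) (RatFunc F) with hφ
  have hXne : φ X ≠ 0 := RatFunc.algebraMap_ne_zero X_ne_zero
  have hd : φ k.denom ≠ 0 := RatFunc.algebraMap_ne_zero k.denom_ne_zero
  have hk : k = φ k.num / φ k.denom := (RatFunc.num_div_denom k).symm
  have E : k.num ^ 2 * (X + 1) = M * X * k.denom ^ 2 := by
    apply IsFractionRing.injective (Polynomial F) (RatFunc F)
    rw [hu_aux, hk] at h
    have hX0 : (RatFunc.X : RatFunc F) ≠ 0 := RatFunc.X_ne_zero
    field_simp at h
    rw [← hφ, div_eq_iff hXne, map_add, map_one] at h; rw [← hφ]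
    simp only [map_mul, map_pow, map_add, map_one]
    linear_combination h
  have hcop : IsCoprime k.num k.denom := RatFunc.isCoprime_num_denom k
  have hdvd1 : k.denom ^ 2 ∣ k.num ^ 2 * (X + 1) := ⟨M * X, by linear_combination E⟩
  have hd2 : k.denom ^ 2 ∣ X + 1 := (hcop.symm.pow).dvd_of_dvd_mul_left hdvd1
  have hdeg1 : (X + 1 : Polynomial F).natDegree = 1 := by
    simpa using natDegree_X_add_C (1 : F)
  have hne : (X + 1 : Polynomial F) ≠ 0 := fun hc => by simp [hc] at hdeg1
  have hdeg : k.denom.natDegree = 0 := by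
    have h1 := Polynomial.natDegree_le_of_dvd hd2 hne
    rw [natDegree_pow, hdeg1] at h1
    omega
  have hd1 : k.denom = 1 := (RatFunc.monic_denom k).natDegree_eq_zero.mp hdeg
  have E2 : k.num ^ 2 * (X + 1) = M * X := by
    rw [hd1] at E; simpa using E
  have hXdvd : (X : Polynomial F) ∣ k.num := by
    have hcop2 : IsCoprime (X : Polynomial F) (X + 1) := ⟨-1, 1, by ring⟩
    have hdvd2 : (X : Polynomial F) ∣ k.num ^ 2 * (X + 1) := ⟨M, by linear_combination E2⟩
    exact prime_X.dvd_of_dvd_pow (hcop2.dvd_of_dvd_mul_right hdvd2)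
  obtain ⟨Q, hQ⟩ := hXdvd
  refine ⟨Q, ?_⟩
  rw [hk, hd1, hQ, map_mul, RatFunc.algebraMap_X]
  simp

lemma not_sq (F : Type*) [Field F] (c : RatFunc F) : c ^ 2 ≠ 1 + RatFunc.X⁻¹ := by
  intro h
  set φ := algebraMap (Polynomial F) (RatFunc F) with hφ
  have hXne : φ X ≠ 0 := RatFunc.algebraMap_ne_zero X_ne_zero
  have hd : φ c.denom ≠ 0 := RatFunc.algebraMap_ne_zero c.denom_ne_zero
  have hk : c = φ c.num / φ c.denom := (RatFunc.num_div_denom c).symm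
  have E : c.num ^ 2 * X = (X + 1) * c.denom ^ 2 := by
    apply IsFractionRing.injective (Polynomial F) (RatFunc F)
    rw [hu_aux, hk] at h
    have hX0 : (RatFunc.X : RatFunc F) ≠ 0 := RatFunc.X_ne_zero
    field_simp at h
    rw [← hφ, eq_div_iff hXne, map_add, map_one] at h; rw [← hφ]
    simp only [map_mul, map_pow, map_add, map_one]
    linear_combination h
  have hcop : IsCoprime c.num c.denom := RatFunc.isCoprime_num_denom c
  have hdvd1 : c.denom ^ 2 ∣ c.num ^ 2 * X := ⟨X + 1, by linear_combination E⟩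
  have hd2 : c.denom ^ 2 ∣ X := (hcop.symm.pow).dvd_of_dvd_mul_left hdvd1
  have hcop2 : IsCoprime (X : Polynomial F) (X + 1) := ⟨-1, 1, by ring⟩
  have hdvd2 : (X : Polynomial F) ∣ (X + 1) * c.denom ^ 2 := ⟨c.num ^ 2, by linear_combination -E⟩
  have hXd : (X : Polynomial F) ∣ c.denom :=
    prime_X.dvd_of_dvd_pow (hcop2.dvd_of_dvd_mul_left hdvd2)
  have h1 := Polynomial.natDegree_le_of_dvd hd2 (X_ne_zero (R := F))
  have h2 := Polynomial.natDegree_le_of_dvd hXd c.denom_ne_zero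
  rw [natDegree_pow, natDegree_X] at h1
  rw [natDegree_X] at h2
  omega

lemma quad_coeff1 (K : Type*) [Field K] (a b : K) :
    ((X : K[X]) ^ 2 - C a * X + C b).coeff 1 = -a := by
  simp [coeff_X_pow]

lemma quad_coeff0 (K : Type*) [Field K] (a b : K) :
    ((X : K[X]) ^ 2 - C a * X + C b).coeff 0 = b := by
  simp [coeff_X_pow]

lemma quad_monic (K : Type*) [Field K] (a b : K) :
    ((X : K[X]) ^ 2 - C a * X + C b).Monic := by
  monicity!

lemma quad_natDegree (K : Type*) [Field K] (a b : K) :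
    ((X : K[X]) ^ 2 - C a * X + C b).natDegree = 2 := by
  compute_degree!

/-- let `F` be a finite field of odd characteristic, `L = F(t)(β)` with
`β² = 1 + t⁻¹`. An element `θ = j + kβ` of `L` (`j, k ∈ F(t)`) is integral over `F[t]`
iff `j ∈ F[t]` and `k ∈ t·F[t]`; consequently the integral closure of `F[t]` in `L`
is `F[t, tβ]`. -/
theorem integral_closure_quadratic (F : Type*) [Field F] [Fintype F]
    (hodd : Odd (ringChar F))
    (L : Type*) [Field L] [Algebra (RatFunc F) L] [Algebra (Polynomial F) L]
    [IsScalarTower (Polynomial F) (RatFunc F) L]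
    (β : L) (hβ : β ^ 2 = algebraMap (RatFunc F) L (1 + RatFunc.X⁻¹))
    (hgen : ∀ z : L, ∃ j k : RatFunc F,
      z = algebraMap (RatFunc F) L j + algebraMap (RatFunc F) L k * β) :
    (∀ j k : RatFunc F,
      IsIntegral (Polynomial F)
          (algebraMap (RatFunc F) L j + algebraMap (RatFunc F) L k * β) ↔
        ((∃ P : Polynomial F, j = algebraMap (Polynomial F) (RatFunc F) P) ∧
         (∃ Q : Polynomial F, k = RatFunc.X * algebraMap (Polynomial F) (RatFunc F) Q))) ∧
    integralClosure (Polynomial F) L =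
      Algebra.adjoin (Polynomial F)
        {algebraMap (RatFunc F) L RatFunc.X * β} := by
  set ψ := algebraMap (RatFunc F) L with hψ
  set φ := algebraMap (Polynomial F) (RatFunc F) with hφ
  have hinj : Function.Injective ψ := ψ.injective
  -- 2 ≠ 0 in F
  have h2 : (2 : F) ≠ 0 := by
    intro h20
    have hprime : (ringChar F).Prime := CharP.char_is_prime F (ringChar F)
    have hdvd : ringChar F ∣ 2 := by
      rw [← CharP.cast_eq_zero_iff F (ringChar F) 2]
      exact_mod_cast h20
    rcases (Nat.dvd_prime Nat.prime_two).mp hdvd with h | h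
    · exact hprime.one_lt.ne' h
    · rw [h] at hodd; simp [Nat.odd_iff] at hodd
  -- β is not in the range of ψ
  have hβr : ∀ c : RatFunc F, ψ c ≠ β := by
    intro c hc
    exact not_sq F c (hinj (by rw [map_pow, hc, hβ]))
  -- tβ is integral
  have hX2X : (RatFunc.X : RatFunc F) ^ 2 * (1 + RatFunc.X⁻¹) = RatFunc.X ^ 2 + RatFunc.X := by
    have hX0 : (RatFunc.X : RatFunc F) ≠ 0 := RatFunc.X_ne_zero
    field_simp
  have hb : IsIntegral (Polynomial F) (ψ RatFunc.X * β) := by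
    refine ⟨X ^ 2 - C (X ^ 2 + X), monic_X_pow_sub_C _ two_ne_zero, ?_⟩
    have : (ψ RatFunc.X * β) ^ 2 = algebraMap (Polynomial F) L (X ^ 2 + X) := by
      rw [IsScalarTower.algebraMap_apply (Polynomial F) (RatFunc F) L, ← hφ, ← hψ]
      rw [mul_pow, hβ, ← map_pow, ← map_mul, hX2X]
      congr 1
      rw [map_add, map_pow, RatFunc.algebraMap_X]
    simp only [eval₂_sub, eval₂_X_pow, eval₂_C, eval₂_pow, eval₂_X]
    rw [this, sub_self]
  -- main equivalence
  have main : ∀ j k : RatFunc F,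
      IsIntegral (Polynomial F) (ψ j + ψ k * β) ↔
        ((∃ P : Polynomial F, j = φ P) ∧ (∃ Q : Polynomial F, k = RatFunc.X * φ Q)) := by
    intro j k
    constructor
    · intro hint
      by_cases hk : k = 0
      · subst hk
        rw [map_zero, zero_mul, add_zero] at hint
        rw [hψ, isIntegral_algebraMap_iff hinj] at hint
        obtain ⟨P, hP⟩ := IsIntegrallyClosed.isIntegral_iff.mp hint
        exact ⟨⟨P, hP.symm⟩, ⟨0, by simp⟩⟩
      · set θ := ψ j + ψ k * β with hθ
        have hθK : IsIntegral (RatFunc F) θ := hint.tower_top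
        set p : (RatFunc F)[X] :=
          X ^ 2 - C (2 * j) * X + C (j ^ 2 - k ^ 2 * (1 + RatFunc.X⁻¹)) with hp
        have hroot : (Polynomial.aeval θ) p = 0 := by
          have hβ2 : β ^ 2 = 1 + ψ RatFunc.X⁻¹ := by rw [hβ, map_add, map_one]
          simp only [hp, hθ, hψ, map_add, map_sub, map_mul, map_pow, map_one, map_ofNat,
            aeval_X, aeval_C]
          linear_combination (algebraMap (RatFunc F) L k) ^ 2 * hβ2
        have hpm : p.Monic := hp ▸ quad_monic _ _ _
        have hpdeg : p.natDegree = 2 := hp ▸ quad_natDegree _ _ _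
        have hdvd : minpoly (RatFunc F) θ ∣ p := minpoly.dvd _ _ hroot
        have hθnot : θ ∉ (algebraMap (RatFunc F) L).range := by
          rintro ⟨c, hc⟩
          refine hβr ((c - j) / k) ?_
          have hkL : ψ k ≠ 0 := fun h0 => hk (hinj (by rw [h0, map_zero]))
          have hc' : ψ c = ψ j + ψ k * β := by rw [← hθ]; exact hc
          rw [map_div₀, map_sub]
          field_simp
          linear_combination hc'
        have h2le : 2 ≤ (minpoly (RatFunc F) θ).natDegree :=
          (minpoly.two_le_natDegree_iff hθK).mpr hθnot
        have hmm : (minpoly (RatFunc F) θ).Monic := minpoly.monic hθK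
        obtain ⟨q, hq⟩ := hdvd
        have hqm : q.Monic := hmm.of_mul_monic_left (hq ▸ hpm)
        have hq1 : q = 1 := by
          have hdeq : p.natDegree = (minpoly (RatFunc F) θ).natDegree + q.natDegree := by
            rw [hq, natDegree_mul hmm.ne_zero hqm.ne_zero]
          rw [← hqm.natDegree_eq_zero]
          omega
        have hpeq : minpoly (RatFunc F) θ = p := by rw [hq, hq1, mul_one]
        have heq : minpoly (RatFunc F) θ = (minpoly (Polynomial F) θ).map φ :=
          minpoly.isIntegrallyClosed_eq_field_fractions' (RatFunc F) hint
        have hc1 : φ ((minpoly (Polynomial F) θ).coeff 1) = -(2 * j) := by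
          rw [← coeff_map, ← heq, hpeq, hp, quad_coeff1]
        have hc0 : φ ((minpoly (Polynomial F) θ).coeff 0) =
            j ^ 2 - k ^ 2 * (1 + RatFunc.X⁻¹) := by
          rw [← coeff_map, ← heq, hpeq, hp, quad_coeff0]
        -- extract j
        have hC2 : (2 : RatFunc F) * φ (Polynomial.C (2⁻¹ : F)) = 1 := by
          rw [RatFunc.algebraMap_C, show (2 : RatFunc F) = RatFunc.C 2 from
            (map_ofNat RatFunc.C 2).symm, ← map_mul, mul_inv_cancel₀ h2, map_one]
        set P1 := (minpoly (Polynomial F) θ).coeff 1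
        have hjP : j = φ (-(Polynomial.C (2⁻¹ : F) * P1)) := by
          rw [map_neg, map_mul]
          linear_combination (-j) * hC2 + φ (Polynomial.C (2⁻¹ : F)) * hc1
        refine ⟨⟨-(Polynomial.C (2⁻¹ : F) * P1), hjP⟩, ?_⟩
        have hM : k ^ 2 * (1 + RatFunc.X⁻¹) =
            φ ((-(Polynomial.C (2⁻¹ : F) * P1)) ^ 2 - (minpoly (Polynomial F) θ).coeff 0) := by
          rw [map_sub, map_pow, ← hjP, hc0]
          ring
        exact key_div F hM
    · rintro ⟨⟨P, hP⟩, ⟨Q, hQ⟩⟩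
      have hrw : ψ j + ψ k * β =
          algebraMap (Polynomial F) L P + algebraMap (Polynomial F) L Q * (ψ RatFunc.X * β) := by
        rw [hP, hQ, IsScalarTower.algebraMap_apply (Polynomial F) (RatFunc F) L,
          IsScalarTower.algebraMap_apply (Polynomial F) (RatFunc F) L, ← hφ, ← hψ, map_mul]
        ring
      rw [hrw]
      exact isIntegral_algebraMap.add (isIntegral_algebraMap.mul hb)
  refine ⟨main, le_antisymm ?_ ?_⟩
  · intro z hz
    obtain ⟨j, k, hzeq⟩ := hgen z
    rw [hzeq] at hz ⊢
    obtain ⟨⟨P, hP⟩, ⟨Q, hQ⟩⟩ := (main j k).mp hz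
    have hrw : ψ j + ψ k * β =
        algebraMap (Polynomial F) L P + algebraMap (Polynomial F) L Q * (ψ RatFunc.X * β) := by
      rw [hP, hQ, IsScalarTower.algebraMap_apply (Polynomial F) (RatFunc F) L,
        IsScalarTower.algebraMap_apply (Polynomial F) (RatFunc F) L, ← hφ, ← hψ, map_mul]
      ring
    rw [hrw]
    exact Subalgebra.add_mem _ (Subalgebra.algebraMap_mem _ _)
      (Subalgebra.mul_mem _ (Subalgebra.algebraMap_mem _ _)
        (Algebra.subset_adjoin (Set.mem_singleton _)))
  · exact Algebra.adjoin_le_iff.mpr (Set.singleton_subset_iff.mpr hb)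
end

section
/- With β² = 1 + t^{−1} in a quadratic extension L of F(t) (F a finite field of odd characteristic), one has the identities (β+1)/(β−1) = t(β+1)² and (β−1)/(β+1) = t(β−1)², and the subring F[(β+1)/(β−1), (β−1)/(β+1)] of L equals F[t, tβ]. -/
/-- with `β² = 1 + t⁻¹` in a quadratic extension `L` of `F(t)`
(`F` a finite field of odd characteristic), one has
`(β+1)/(β−1) = t(β+1)²`, `(β−1)/(β+1) = t(β−1)²`, and
`F[(β+1)/(β−1), (β−1)/(β+1)] = F[t, tβ]`. -/
theorem quadratic_ring_identities (F : Type*) [Field F] [Fintype F]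
    (hodd : Odd (ringChar F))
    (L : Type*) [Field L] [Algebra F L] [Algebra (RatFunc F) L]
    [IsScalarTower F (RatFunc F) L]
    (β : L) (hβ : β ^ 2 = algebraMap (RatFunc F) L (1 + RatFunc.X⁻¹)) :
    (β + 1) / (β - 1) = algebraMap (RatFunc F) L RatFunc.X * (β + 1) ^ 2 ∧
    (β - 1) / (β + 1) = algebraMap (RatFunc F) L RatFunc.X * (β - 1) ^ 2 ∧
    Algebra.adjoin F {(β + 1) / (β - 1), (β - 1) / (β + 1)} =
      Algebra.adjoin F {algebraMap (RatFunc F) L RatFunc.X,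
        algebraMap (RatFunc F) L RatFunc.X * β} := by
  set T : L := algebraMap (RatFunc F) L RatFunc.X with hT_def
  have hXne : (RatFunc.X : RatFunc F) ≠ 0 := RatFunc.X_ne_zero
  have hTne : T ≠ 0 := by
    simpa [hT_def] using (map_ne_zero (algebraMap (RatFunc F) L)).mpr hXne
  have hβ2 : β ^ 2 = 1 + T⁻¹ := by
    rw [hβ, map_add, map_one, map_inv₀]
  have h1 : T * (β ^ 2 - 1) = 1 := by
    rw [hβ2]; field_simp; ring
  have h1' : T * (β - 1) * (β + 1) = 1 := by linear_combination h1
  have hm1 : β - 1 ≠ 0 := by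
    intro h; rw [h, mul_zero, zero_mul] at h1'; exact one_ne_zero h1'.symm
  have hp1 : β + 1 ≠ 0 := by
    intro h; rw [h, mul_zero] at h1'; exact one_ne_zero h1'.symm
  have hu : (β + 1) / (β - 1) = T * (β + 1) ^ 2 := by
    rw [div_eq_iff hm1]; linear_combination (-(β + 1)) * h1
  have hv : (β - 1) / (β + 1) = T * (β - 1) ^ 2 := by
    rw [div_eq_iff hp1]; linear_combination (-(β - 1)) * h1
  refine ⟨hu, hv, ?_⟩
  have hu' : (β + 1) / (β - 1) = T + T + (T * β + T * β) + 1 := by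
    rw [hu]; linear_combination h1
  have hv' : (β - 1) / (β + 1) = T + T - (T * β + T * β) + 1 := by
    rw [hv]; linear_combination h1
  rw [hu', hv']
  have h2F : (2 : F) ≠ 0 := Ring.two_ne_zero (by
    intro h; rw [h] at hodd; exact (Nat.not_even_iff_odd.mpr hodd) even_two)
  have h4F : (4 : F) ≠ 0 := by
    intro h
    have : (2 : F) * 2 = 0 := by linear_combination h
    exact h2F (mul_self_eq_zero.mp this)
  have hc : algebraMap F L (4⁻¹ : F) * 4 = 1 := by
    rw [← map_ofNat (algebraMap F L) 4, ← map_mul, inv_mul_cancel₀ h4F, map_one]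
  apply le_antisymm
  · apply Algebra.adjoin_le
    intro x hx
    have hT' : T ∈ Algebra.adjoin F {T, T * β} :=
      Algebra.subset_adjoin (Set.mem_insert _ _)
    have hTβ' : T * β ∈ Algebra.adjoin F {T, T * β} :=
      Algebra.subset_adjoin (Set.mem_insert_of_mem _ rfl)
    simp only [Set.mem_insert_iff, Set.mem_singleton_iff] at hx
    rcases hx with rfl | rfl
    · exact add_mem (add_mem (add_mem hT' hT') (add_mem hTβ' hTβ')) (one_mem _)
    · exact add_mem (sub_mem (add_mem hT' hT') (add_mem hTβ' hTβ')) (one_mem _)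
  · apply Algebra.adjoin_le
    intro x hx
    set S := Algebra.adjoin F {T + T + (T * β + T * β) + 1,
      T + T - (T * β + T * β) + 1} with hS
    have huS : T + T + (T * β + T * β) + 1 ∈ S :=
      Algebra.subset_adjoin (Set.mem_insert _ _)
    have hvS : T + T - (T * β + T * β) + 1 ∈ S :=
      Algebra.subset_adjoin (Set.mem_insert_of_mem _ rfl)
    have hTS : T ∈ S := by
      have heq : T = algebraMap F L (4⁻¹ : F) *
          ((T + T + (T * β + T * β) + 1) + (T + T - (T * β + T * β) + 1) - 1 - 1) := by
        linear_combination (-T) * hc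
      rw [heq]
      exact mul_mem (S.algebraMap_mem _)
        (sub_mem (sub_mem (add_mem huS hvS) (one_mem _)) (one_mem _))
    have hTβS : T * β ∈ S := by
      have heq : T * β = algebraMap F L (4⁻¹ : F) *
          ((T + T + (T * β + T * β) + 1) - (T + T - (T * β + T * β) + 1)) := by
        linear_combination (-(T * β)) * hc
      rw [heq]
      exact mul_mem (S.algebraMap_mem _) (sub_mem huS hvS)
    simp only [Set.mem_insert_iff, Set.mem_singleton_iff] at hx
    rcases hx with rfl | rfl
    · exact hTS
    · exact hTβS
end

section
/- The map sending t ↦ (β+1)/(β−1) extends to a field isomorphism F(t) → L = F(t)(β), where β² = 1 + t^{−1}; in particular (β+1)/(β−1) is transcendental over F and generates L over F. Moreover this isomorphism maps F[t, t^{−1}] onto F[(β+1)/(β−1), (β−1)/(β+1)] = F[t, tβ]. -/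
/-!
Write `t` for the image of `X` and `γ = (β + 1) / (β - 1)`. From `t (β² - 1) = 1` one gets
`γ = 1 + 2t + 2tβ` and `γ⁻¹ = 1 + 2t - 2tβ`, so, `2` being invertible, `F[γ, γ⁻¹] = F[t, tβ]`.
Hence `F(γ)` contains `t` and `β = tβ / t`, i.e. `F(γ) = L`, and `γ` is transcendental since `t` is.
So `X ↦ γ` is an isomorphism `F(X) ≃ F(γ) = L`, and it carries `F[X, X⁻¹]` onto `F[γ, γ⁻¹]`.
-/

open IntermediateField

section QuadraticIdentities

variable {L : Type*} [Field L] {t β : L}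

theorem add_one_div_sub_one_eq (h : t * (β ^ 2 - 1) = 1) :
    (β + 1) / (β - 1) = 1 + 2 * t + 2 * (t * β) := by
  have hβ : β - 1 ≠ 0 := fun h0 => by simp [show β = 1 by linear_combination h0] at h
  rw [div_eq_iff hβ]
  linear_combination (-2 : L) * h

theorem inv_add_one_div_sub_one_eq (h : t * (β ^ 2 - 1) = 1) :
    ((β + 1) / (β - 1))⁻¹ = 1 + 2 * t - 2 * (t * β) := by
  have hβ : β + 1 ≠ 0 := fun h0 => by simp [show β = -1 by linear_combination h0] at h
  rw [inv_div, div_eq_iff hβ]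
  linear_combination (2 : L) * h

end QuadraticIdentities

theorem Subalgebra.div_algebraMap_mem {F L : Type*} [Field F] [Field L] [Algebra F L]
    (S : Subalgebra F L) (c : F) {x : L} (hx : x ∈ S) : x / algebraMap F L c ∈ S := by
  rw [div_eq_inv_mul, ← map_inv₀, ← Algebra.smul_def]
  exact S.smul_mem hx _

theorem adjoin_add_one_div_sub_one_and_inv_eq {F L : Type*} [Field F] [Field L] [Algebra F L]
    {t β : L} (h2 : (2 : F) ≠ 0) (h : t * (β ^ 2 - 1) = 1) :
    Algebra.adjoin F {(β + 1) / (β - 1), ((β + 1) / (β - 1))⁻¹} =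
      Algebra.adjoin F {t, t * β} := by
  have h4 : algebraMap F L 4 ≠ 0 := by
    rw [map_ne_zero, show (4 : F) = 2 * 2 by norm_num]
    exact mul_ne_zero h2 h2
  have ht : t = ((β + 1) / (β - 1) + ((β + 1) / (β - 1))⁻¹ - 2) / algebraMap F L 4 := by
    rw [eq_div_iff h4, inv_add_one_div_sub_one_eq h, add_one_div_sub_one_eq h, map_ofNat]
    ring
  have htβ : t * β = ((β + 1) / (β - 1) - ((β + 1) / (β - 1))⁻¹) / algebraMap F L 4 := by
    rw [eq_div_iff h4, inv_add_one_div_sub_one_eq h, add_one_div_sub_one_eq h, map_ofNat]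
    ring
  apply le_antisymm <;> rw [Algebra.adjoin_le_iff, Set.pair_subset_iff, SetLike.mem_coe,
    SetLike.mem_coe]
  · have ht_mem : t ∈ Algebra.adjoin F {t, t * β} := Algebra.subset_adjoin (by simp)
    have htβ_mem : t * β ∈ Algebra.adjoin F {t, t * β} := Algebra.subset_adjoin (by simp)
    rw [inv_add_one_div_sub_one_eq h, add_one_div_sub_one_eq h]
    exact ⟨add_mem (add_mem (one_mem _) (mul_mem (ofNat_mem _ 2) ht_mem))
        (mul_mem (ofNat_mem _ 2) htβ_mem),
      sub_mem (add_mem (one_mem _) (mul_mem (ofNat_mem _ 2) ht_mem))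
        (mul_mem (ofNat_mem _ 2) htβ_mem)⟩
  · set γ := (β + 1) / (β - 1)
    have hγ : γ ∈ Algebra.adjoin F {γ, γ⁻¹} := Algebra.subset_adjoin (by simp)
    have hγinv : γ⁻¹ ∈ Algebra.adjoin F {γ, γ⁻¹} := Algebra.subset_adjoin (by simp)
    rw [htβ, ht]
    exact ⟨Subalgebra.div_algebraMap_mem _ _ (sub_mem (add_mem hγ hγinv) (ofNat_mem _ 2)),
      Subalgebra.div_algebraMap_mem _ _ (sub_mem hγ hγinv)⟩

theorem RatFunc.fieldRange_eq_adjoin {K L : Type*} [Field K] [Field L] [Algebra K L]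
    (φ : RatFunc K →ₐ[K] L) : φ.fieldRange = K⟮φ RatFunc.X⟯ := by
  rw [AlgHom.fieldRange_eq_map, ← RatFunc.adjoin_X, adjoin_map, Set.image_singleton]

theorem Transcendental.of_mem_adjoin_simple {F L : Type*} [Field F] [Field L] [Algebra F L]
    {x y : L} (hy : y ∈ F⟮x⟯) (hty : Transcendental F y) : Transcendental F x := fun hx =>
  hty (((isAlgebraic_adjoin_simple hx.isIntegral).isAlgebraic ⟨y, hy⟩).algHom F⟮x⟯.val)

theorem adjoin_add_one_div_sub_one_eq_top {F L : Type*} [Field F] [Field L] [Algebra F L]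
    [Algebra (RatFunc F) L] [IsScalarTower F (RatFunc F) L] {β : L} (h2 : (2 : F) ≠ 0)
    (h : algebraMap (RatFunc F) L RatFunc.X * (β ^ 2 - 1) = 1)
    (hgen : ∀ z : L, ∃ j k : RatFunc F,
      z = algebraMap (RatFunc F) L j + algebraMap (RatFunc F) L k * β) :
    F⟮(β + 1) / (β - 1)⟯ = ⊤ := by
  set t := algebraMap (RatFunc F) L RatFunc.X
  set E := F⟮(β + 1) / (β - 1)⟯
  have hsub : Algebra.adjoin F {t, t * β} ≤ E.toSubalgebra := by
    rw [← adjoin_add_one_div_sub_one_and_inv_eq h2 h, Algebra.adjoin_le_iff, Set.pair_subset_iff]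
    exact ⟨mem_adjoin_simple_self F _, E.inv_mem (mem_adjoin_simple_self F _)⟩
  have ht : t ∈ E := hsub (Algebra.subset_adjoin (by simp))
  have htβ : t * β ∈ E := hsub (Algebra.subset_adjoin (by simp))
  have hβ : β ∈ E := by
    simpa [left_ne_zero_of_mul_eq_one h] using E.div_mem htβ ht
  have hbase (j : RatFunc F) : algebraMap (RatFunc F) L j ∈ E := by
    apply adjoin_simple_le_iff.mpr ht
    change _ ∈ F⟮IsScalarTower.toAlgHom F (RatFunc F) L RatFunc.X⟯
    rw [← RatFunc.fieldRange_eq_adjoin]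
    exact ⟨j, rfl⟩
  refine eq_top_iff.mpr fun z _ => ?_
  obtain ⟨j, k, rfl⟩ := hgen z
  exact add_mem (hbase j) (mul_mem (hbase k) hβ)

theorem ratfunc_iso_quadratic_general (F : Type*) [Field F]
    (hodd : Odd (ringChar F))
    (L : Type*) [Field L] [Algebra F L] [Algebra (RatFunc F) L]
    [IsScalarTower F (RatFunc F) L]
    (β : L) (hβ : β ^ 2 = algebraMap (RatFunc F) L (1 + RatFunc.X⁻¹))
    (hgen : ∀ z : L, ∃ j k : RatFunc F,
      z = algebraMap (RatFunc F) L j + algebraMap (RatFunc F) L k * β) :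
    Transcendental F ((β + 1) / (β - 1)) ∧
    ∃ σ : RatFunc F ≃ₐ[F] L,
      σ RatFunc.X = (β + 1) / (β - 1) ∧
      (Algebra.adjoin F {RatFunc.X, RatFunc.X⁻¹}).map σ.toAlgHom =
        Algebra.adjoin F {algebraMap (RatFunc F) L RatFunc.X,
          algebraMap (RatFunc F) L RatFunc.X * β} := by
  have h2 : (2 : F) ≠ 0 := Ring.two_ne_zero fun h => by rw [h] at hodd; exact absurd hodd (by decide)
  have ht0 : algebraMap (RatFunc F) L RatFunc.X ≠ 0 := (map_ne_zero _).mpr RatFunc.X_ne_zero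
  have h : algebraMap (RatFunc F) L RatFunc.X * (β ^ 2 - 1) = 1 := by
    rw [hβ, map_add, map_one, map_inv₀]
    field_simp
    ring
  have htop := adjoin_add_one_div_sub_one_eq_top h2 h hgen
  have htr : Transcendental F ((β + 1) / (β - 1)) :=
    ((transcendental_algebraMap_iff (algebraMap (RatFunc F) L).injective).mpr
      RatFunc.transcendental_X).of_mem_adjoin_simple (htop ▸ mem_top)
  let σ : RatFunc F ≃ₐ[F] L :=
    (RatFunc.algEquivOfTranscendental _ htr).trans ((equivOfEq htop).trans topEquiv)
  have hσX : σ RatFunc.X = (β + 1) / (β - 1) := by simp [σ]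
  refine ⟨htr, σ, hσX, ?_⟩
  rw [AlgHom.map_adjoin, Set.image_pair]
  change Algebra.adjoin F {σ RatFunc.X, σ RatFunc.X⁻¹} = _
  rw [map_inv₀, hσX, adjoin_add_one_div_sub_one_and_inv_eq h2 h]

/-- the map `t ↦ (β+1)/(β−1)` extends to a field isomorphism
`F(t) ≃ L = F(t)(β)` (where `β² = 1 + t⁻¹`); in particular `(β+1)/(β−1)` is
transcendental over `F`, and the isomorphism maps `F[t, t⁻¹]` onto
`F[(β+1)/(β−1), (β−1)/(β+1)] = F[t, tβ]`. -/
theorem ratfunc_iso_quadratic (F : Type*) [Field F] [Fintype F]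
    (hodd : Odd (ringChar F))
    (L : Type*) [Field L] [Algebra F L] [Algebra (RatFunc F) L]
    [IsScalarTower F (RatFunc F) L]
    (β : L) (hβ : β ^ 2 = algebraMap (RatFunc F) L (1 + RatFunc.X⁻¹))
    (hgen : ∀ z : L, ∃ j k : RatFunc F,
      z = algebraMap (RatFunc F) L j + algebraMap (RatFunc F) L k * β) :
    Transcendental F ((β + 1) / (β - 1)) ∧
    ∃ σ : RatFunc F ≃ₐ[F] L,
      σ RatFunc.X = (β + 1) / (β - 1) ∧
      (Algebra.adjoin F {RatFunc.X, RatFunc.X⁻¹}).map σ.toAlgHom =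
        Algebra.adjoin F {algebraMap (RatFunc F) L RatFunc.X,
          algebraMap (RatFunc F) L RatFunc.X * β} :=
  ratfunc_iso_quadratic_general F hodd L β hβ hgen
end

section
/- Let F be a finite field of characteristic p ∈ {3,5,7,11}, K = F((t^{−1})), and suppose α ∈ K satisfies inf over nonzero N ∈ F[t] and k ≥ 0 of |N|·|⟨N t^k α⟩| > 0 (the t-adic Littlewood counterexample property). Then for all nonzero P, Q ∈ F[t] and all n ≥ 0, the quantity max(|t^{m+n}(Q t^{−2n} α^{−1} + P)|, |t^{−m−n} Q|) for m ≥ n ≥ 0 is bounded below by a positive constant independent of P, Q, m, n. -/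
open scoped Classical in
/-- The ultrametric absolute value on `K = F((t⁻¹))`, realized as Laurent series in
`X = t⁻¹`, normalized so that `|b tˡ| = pˡ` (i.e. `|y| = p^(-ord_X y)`). -/
noncomputable def absv {F : Type*} [Field F] (p : ℕ) (y : LaurentSeries F) : ℝ :=
  if y = 0 then 0 else (p : ℝ) ^ (-(HahnSeries.order y))

open scoped Classical in
/-- The fractional part `⟨y⟩` of a Laurent series: the part with strictly negative
powers of `t`, i.e. strictly positive powers of `X = t⁻¹`. -/
noncomputable def fracPart {F : Type*} [Field F] (y : LaurentSeries F) : LaurentSeries F :=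
  { coeff := fun n => if 1 ≤ n then y.coeff n else 0
    isPWO_support' := y.isPWO_support'.mono (by
      intro n hn
      simp only [Function.mem_support, ne_eq] at hn ⊢
      intro h
      apply hn
      simp [h]) }

/-- The element `t = X⁻¹` of `K = F((t⁻¹))`. -/
noncomputable def tK (F : Type*) [Field F] : LaurentSeries F :=
  ((PowerSeries.X : PowerSeries F) : LaurentSeries F)⁻¹

/-- Evaluation of a polynomial `N ∈ F[t]` in `K = F((t⁻¹))` at `t`. -/
noncomputable def polyToK (F : Type*) [Field F] (N : Polynomial F) : LaurentSeries F :=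
  Polynomial.aeval (tK F) N

section
variable {F : Type*} [Field F] {p : ℕ}

lemma tK_eq : tK F = HahnSeries.single (-1 : ℤ) (1 : F) := by
  rw [tK, PowerSeries.coe_X]
  refine inv_eq_of_mul_eq_one_right ?_
  rw [HahnSeries.single_mul_single, add_neg_cancel, one_mul, HahnSeries.single_zero_one]

lemma tK_pow (k : ℕ) : tK F ^ k = HahnSeries.single (-(k : ℤ)) (1 : F) := by
  induction k with
  | zero => simp [HahnSeries.single_zero_one]
  | succ k ih =>
    rw [pow_succ, ih, tK_eq, HahnSeries.single_mul_single, one_mul]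
    congr 1
    push_cast; ring

lemma tK_ne_zero : tK F ≠ 0 := by
  rw [tK_eq]; exact HahnSeries.single_ne_zero one_ne_zero

open scoped Classical in
lemma absv_def (y : LaurentSeries F) :
    absv p y = if y = 0 then 0 else (p : ℝ) ^ (-(HahnSeries.order y)) := rfl

lemma absv_zero : absv p (0 : LaurentSeries F) = 0 := by simp [absv_def]

lemma absv_nonneg (y : LaurentSeries F) : 0 ≤ absv p y := by
  rw [absv_def]; split
  · exact le_refl _
  · positivity

lemma absv_of_ne (hp : 0 < p) {y : LaurentSeries F} (hy : y ≠ 0) :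
    absv p y = (p : ℝ) ^ (-(HahnSeries.order y)) := by rw [absv_def, if_neg hy]

lemma absv_pos (hp : 0 < p) {y : LaurentSeries F} (hy : y ≠ 0) : 0 < absv p y := by
  rw [absv_of_ne hp hy]
  have : (0:ℝ) < p := by exact_mod_cast hp
  positivity

lemma absv_mul (hp : 0 < p) (x y : LaurentSeries F) :
    absv p (x * y) = absv p x * absv p y := by
  rcases eq_or_ne x 0 with rfl | hx
  · simp [absv_zero]
  rcases eq_or_ne y 0 with rfl | hy
  · simp [absv_zero]
  have hxy : x * y ≠ 0 := mul_ne_zero hx hy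
  rw [absv_of_ne hp hxy, absv_of_ne hp hx, absv_of_ne hp hy,
    HahnSeries.order_mul hx hy, neg_add, zpow_add₀]
  exact_mod_cast hp.ne'

lemma absv_one : absv p (1 : LaurentSeries F) = 1 := by
  simp [absv_def, HahnSeries.order_one]

lemma absv_inv (hp : 0 < p) (x : LaurentSeries F) : absv p x⁻¹ = (absv p x)⁻¹ := by
  rcases eq_or_ne x 0 with rfl | hx
  · simp [absv_zero]
  have h1 : absv p x * absv p x⁻¹ = 1 := by
    rw [← absv_mul hp, mul_inv_cancel₀ hx, absv_one]
  exact eq_inv_of_mul_eq_one_right (by linarith [mul_comm (absv p x) (absv p x⁻¹)])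

lemma absv_tK_pow (hp : 0 < p) (k : ℕ) : absv p (tK F ^ k) = (p : ℝ) ^ (k : ℤ) := by
  rw [tK_pow, absv_of_ne hp (HahnSeries.single_ne_zero one_ne_zero),
    HahnSeries.order_single one_ne_zero, neg_neg]

lemma absv_tK_inv_pow (hp : 0 < p) (k : ℕ) :
    absv p ((tK F)⁻¹ ^ k) = (p : ℝ) ^ (-(k : ℤ)) := by
  rw [inv_pow, absv_inv hp, absv_tK_pow hp, ← zpow_neg]

lemma algebraMap_single_zero (r : F) :
    algebraMap F (LaurentSeries F) r = HahnSeries.single (0 : ℤ) r := by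
  rw [HahnSeries.algebraMap_apply']
  rw [show (algebraMap F (PowerSeries F)) r = PowerSeries.C r from rfl]
  rw [HahnSeries.ofPowerSeries_C]
  rfl

open scoped Classical in
lemma coeff_polyToK (N : Polynomial F) (n : ℤ) :
    (polyToK F N).coeff n = if n ≤ 0 then N.coeff (-n).toNat else 0 := by
  have hco : (polyToK F N).coeff n
      = ∑ i ∈ Finset.range (N.natDegree + 1), N.coeff i * (tK F ^ i).coeff n := by
    rw [polyToK, Polynomial.aeval_eq_sum_range, ← HahnSeries.coeff.addMonoidHom_apply, map_sum]
    refine Finset.sum_congr rfl fun i _ => ?_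
    simp only [HahnSeries.coeff.addMonoidHom_apply, Algebra.smul_def, algebraMap_single_zero,
      HahnSeries.coeff_single_zero_mul]
  rw [hco]
  have hterm : ∀ i : ℕ, N.coeff i * (tK F ^ i).coeff n
      = if n = -(i : ℤ) then N.coeff i else 0 := by
    intro i
    rw [tK_pow, HahnSeries.coeff_single]
    split <;> simp
  simp only [hterm]
  by_cases hn : n ≤ 0
  · rw [if_pos hn]
    rw [Finset.sum_eq_single ((-n).toNat)]
    · rw [if_pos]; omega
    · intro b _ hb
      rw [if_neg]; omega
    · intro hmem
      rw [if_pos (by omega)]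
      exact Polynomial.coeff_eq_zero_of_natDegree_lt (by simp at hmem; omega)
  · rw [if_neg hn]
    apply Finset.sum_eq_zero
    intro i _
    rw [if_neg (by omega)]

lemma polyToK_ne_zero {N : Polynomial F} (hN : N ≠ 0) : polyToK F N ≠ 0 := by
  intro h
  apply hN
  ext j
  have := coeff_polyToK N (-(j : ℤ))
  rw [h] at this
  simp only [HahnSeries.coeff_zero] at this
  rw [if_pos (by omega)] at this
  have h2 : N.coeff j = 0 := by simpa using this.symm
  simp [h2]

lemma order_polyToK_nonpos {N : Polynomial F} (hN : N ≠ 0) : (polyToK F N).order ≤ 0 := by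
  have h : (polyToK F N).coeff (-(N.natDegree : ℤ)) ≠ 0 := by
    rw [coeff_polyToK N, if_pos (by omega)]
    simpa using Polynomial.leadingCoeff_ne_zero.mpr hN
  exact le_trans (HahnSeries.order_le_of_coeff_ne_zero h) (by omega)

lemma one_le_absv_polyToK (hp : 1 < p) {N : Polynomial F} (hN : N ≠ 0) :
    1 ≤ absv p (polyToK F N) := by
  rw [absv_of_ne (by omega) (polyToK_ne_zero hN)]
  have h1 : (1:ℝ) ≤ (p : ℝ) := by exact_mod_cast hp.le
  calc (1:ℝ) = (p:ℝ) ^ (0:ℤ) := by simp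
  _ ≤ (p:ℝ) ^ (-(polyToK F N).order) := by
      apply zpow_le_zpow_right₀ h1
      have := order_polyToK_nonpos hN
      omega

open scoped Classical in
lemma coeff_fracPart (y : LaurentSeries F) (n : ℤ) :
    (fracPart y).coeff n = if 1 ≤ n then y.coeff n else 0 := rfl

lemma fracPart_add_poly (N : Polynomial F) (z : LaurentSeries F) :
    fracPart (polyToK F N + z) = fracPart z := by
  ext n
  rw [coeff_fracPart, coeff_fracPart, HahnSeries.coeff_add, coeff_polyToK]
  by_cases hn : 1 ≤ n
  · rw [if_pos hn, if_pos hn, if_neg (by omega), zero_add]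
  · rw [if_neg hn, if_neg hn]

lemma fracPart_zero : fracPart (0 : LaurentSeries F) = 0 := by
  ext n
  rw [coeff_fracPart]
  simp

lemma absv_fracPart_le (hp : 1 < p) (y : LaurentSeries F) :
    absv p (fracPart y) ≤ absv p y := by
  rcases eq_or_ne (fracPart y) 0 with h0 | h0
  · rw [h0, absv_zero]; exact absv_nonneg y
  have hy : y ≠ 0 := by
    intro h; rw [h, fracPart_zero] at h0; exact h0 rfl
  have h1 : (fracPart y).coeff (fracPart y).order ≠ 0 := HahnSeries.coeff_order_eq_zero.not.2 h0
  rw [coeff_fracPart] at h1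
  by_cases ho : 1 ≤ (fracPart y).order
  · rw [if_pos ho] at h1
    have h2 : y.order ≤ (fracPart y).order := HahnSeries.order_le_of_coeff_ne_zero h1
    rw [absv_of_ne (by omega) h0, absv_of_ne (by omega) hy]
    apply zpow_le_zpow_right₀ (by exact_mod_cast hp.le)
    omega
  · rw [if_neg ho] at h1; exact absurd rfl h1

lemma le_absv_add (hp : 1 < p) {x y : LaurentSeries F}
    (h : absv p x ≠ absv p y) : absv p y ≤ absv p (x + y) := by
  have hp0 : 0 < p := by omega
  have hp1 : (1:ℝ) ≤ (p:ℝ) := by exact_mod_cast hp.le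
  rcases eq_or_ne x 0 with rfl | hx
  · rw [zero_add]
  rcases eq_or_ne y 0 with rfl | hy
  · rw [absv_zero]; exact absv_nonneg _
  rcases lt_trichotomy x.order y.order with hlt | heq | hgt
  · -- |x| > |y|; coeff of x+y at order x nonzero
    have hc : (x + y).coeff x.order ≠ 0 := by
      rw [HahnSeries.coeff_add, HahnSeries.coeff_eq_zero_of_lt_order hlt, add_zero]
      exact HahnSeries.coeff_order_eq_zero.not.2 hx
    have hxy : x + y ≠ 0 := by
      intro h0; rw [h0] at hc; exact hc rfl
    have h2 : (x + y).order ≤ x.order := HahnSeries.order_le_of_coeff_ne_zero hc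
    rw [absv_of_ne hp0 hxy, absv_of_ne hp0 hy]
    calc (p:ℝ) ^ (-y.order) ≤ (p:ℝ) ^ (-x.order) := by
          apply zpow_le_zpow_right₀ hp1; omega
    _ ≤ (p:ℝ) ^ (-(x+y).order) := by
          apply zpow_le_zpow_right₀ hp1; omega
  · exfalso; apply h
    rw [absv_of_ne hp0 hx, absv_of_ne hp0 hy, heq]
  · have hc : (x + y).coeff y.order ≠ 0 := by
      rw [HahnSeries.coeff_add, HahnSeries.coeff_eq_zero_of_lt_order hgt, zero_add]
      exact HahnSeries.coeff_order_eq_zero.not.2 hy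
    have hxy : x + y ≠ 0 := by
      intro h0; rw [h0] at hc; exact hc rfl
    have h2 : (x + y).order ≤ y.order := HahnSeries.order_le_of_coeff_ne_zero hc
    rw [absv_of_ne hp0 hxy, absv_of_ne hp0 hy]
    apply zpow_le_zpow_right₀ hp1; omega

end

/-- let `F` be a finite field of characteristic `p ∈ {3,5,7,11}`,
`K = F((t⁻¹))`, and `α ∈ K` a `t`-adic Littlewood counterexample, i.e.
`inf { |N|·|⟨N tᵏ α⟩| : 0 ≠ N ∈ F[t], k ≥ 0 } > 0`. Then
`max(|t^(m+n) (Q t^(-2n) α⁻¹ + P)|, |t^(-m-n) Q|)` is bounded below by a positive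
constant independent of the nonzero `P, Q ∈ F[t]` and of `m ≥ n ≥ 0`. -/
theorem littlewood_gives_lower_bound (F : Type*) [Field F] [Fintype F]
    (hp : ringChar F ∈ ({3, 5, 7, 11} : Set ℕ))
    (α : LaurentSeries F)
    (hα : ∃ c : ℝ, 0 < c ∧ ∀ N : Polynomial F, N ≠ 0 → ∀ k : ℕ,
      c ≤ absv (ringChar F) (polyToK F N) *
        absv (ringChar F) (fracPart (polyToK F N * tK F ^ k * α))) :
    ∃ c : ℝ, 0 < c ∧ ∀ P Q : Polynomial F, P ≠ 0 → Q ≠ 0 → ∀ m n : ℕ, n ≤ m →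
      c ≤ max
        (absv (ringChar F)
          (tK F ^ (m + n) * ((tK F)⁻¹ ^ (2 * n) * polyToK F Q * α⁻¹ + polyToK F P)))
        (absv (ringChar F) ((tK F)⁻¹ ^ (m + n) * polyToK F Q)) := by
  obtain ⟨c₀, hc₀, hB⟩ := hα
  set p := ringChar F with hpdef
  have hp1 : 1 < p := by
    simp only [Set.mem_insert_iff, Set.mem_singleton_iff] at hp
    rcases hp with h|h|h|h <;> omega
  have hp0 : 0 < p := by omega
  have hpR : (1:ℝ) < (p:ℝ) := by exact_mod_cast hp1
  have hpRne : (p:ℝ) ≠ 0 := by positivity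
  have hα0 : α ≠ 0 := by
    intro h
    have h1 := hB 1 one_ne_zero 0
    rw [h, mul_zero, fracPart_zero, absv_zero, mul_zero] at h1
    linarith
  have hA : 0 < absv p α := absv_pos hp0 hα0
  set A := absv p α with hAdef
  refine ⟨min A⁻¹ (Real.sqrt c₀), lt_min (by positivity) (Real.sqrt_pos.mpr hc₀), ?_⟩
  intro P Q hP hQ m n hnm
  obtain ⟨d, rfl⟩ : ∃ d, m = n + d := ⟨m - n, by omega⟩
  have htK : tK F ≠ 0 := tK_ne_zero
  set z : LaurentSeries F := tK F ^ (2*n) * polyToK F P * α with hz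
  set S : LaurentSeries F := polyToK F Q + z with hS
  have hkey : tK F ^ (n + d + n) * ((tK F)⁻¹ ^ (2*n) * polyToK F Q * α⁻¹ + polyToK F P)
      = tK F ^ d * α⁻¹ * S := by
    rw [hS, hz]
    have h2 : n + d + n = 2*n + d := by ring
    rw [h2, pow_add]
    field_simp
    simp only [mul_add, ← mul_assoc, ← mul_pow, mul_one_div_cancel htK, one_pow, one_mul]
  have hPv : 0 < absv p (polyToK F P) := absv_pos hp0 (polyToK_ne_zero hP)
  have hfrac : c₀ ≤ absv p S * absv p (polyToK F P) := by
    have h1 := hB P hP (2*n)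
    have h2 : fracPart S = fracPart (polyToK F P * tK F ^ (2*n) * α) := by
      rw [hS, hz]
      rw [show tK F ^ (2*n) * polyToK F P * α = polyToK F P * tK F ^ (2*n) * α by ring]
      exact fracPart_add_poly Q _
    have h3 : absv p (fracPart S) ≤ absv p S := absv_fracPart_le hp1 S
    rw [← h2] at h1
    calc c₀ ≤ absv p (polyToK F P) * absv p (fracPart S) := h1
    _ ≤ absv p (polyToK F P) * absv p S :=
        mul_le_mul_of_nonneg_left h3 hPv.le
    _ = absv p S * absv p (polyToK F P) := mul_comm _ _
  have hT1 : absv p (tK F ^ (n + d + n) * ((tK F)⁻¹ ^ (2*n) * polyToK F Q * α⁻¹ + polyToK F P))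
      = (p:ℝ)^(d:ℤ) * A⁻¹ * absv p S := by
    rw [hkey, absv_mul hp0, absv_mul hp0, absv_tK_pow hp0, absv_inv hp0, ← hAdef]
  have hT2 : absv p ((tK F)⁻¹ ^ (n + d + n) * polyToK F Q)
      = (p:ℝ)^(-(n + d + n : ℕ) : ℤ) * absv p (polyToK F Q) := by
    rw [absv_mul hp0, absv_tK_inv_pow hp0]
  have hQv1 : (1:ℝ) ≤ absv p (polyToK F Q) := one_le_absv_polyToK hp1 hQ
  have hSnn : 0 ≤ absv p S := absv_nonneg S
  rw [hT1, hT2]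
  by_cases hcase : absv p z = absv p (polyToK F Q)
  · -- the critical case
    have hzv : absv p z = (p:ℝ)^((2*n : ℕ):ℤ) * absv p (polyToK F P) * A := by
      rw [hz, absv_mul hp0, absv_mul hp0, absv_tK_pow hp0, ← hAdef]
    set a := (p:ℝ)^(d:ℤ) with ha
    set b := (p:ℝ)^((2*n : ℕ):ℤ) with hb
    set e := (p:ℝ)^(-(n + d + n : ℕ) : ℤ) with he
    have hae : 0 < a := by positivity
    have hbe : 0 < b := by positivity
    have hee : 0 < e := by positivity
    have habe : a * b * e = 1 := by
      rw [ha, hb, he, ← zpow_add₀ hpRne, ← zpow_add₀ hpRne]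
      rw [show (d:ℤ) + ((2*n : ℕ):ℤ) + (-(n + d + n : ℕ) : ℤ) = 0 by push_cast; ring]
      exact zpow_zero _
    have hPQ : absv p (polyToK F P) * (b * A) = absv p (polyToK F Q) := by
      rw [← hcase, hzv]; ring
    have key : c₀ ≤ (a * A⁻¹ * absv p S) * (e * absv p (polyToK F Q)) := by
      rw [← hPQ]
      have hAA : A⁻¹ * A = 1 := inv_mul_cancel₀ hA.ne'
      calc c₀ = c₀ * (a*b*e) := by rw [habe, mul_one]
      _ = (a*e*b) * c₀ := by ring
      _ ≤ (a*e*b) * (absv p S * absv p (polyToK F P)) :=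
          mul_le_mul_of_nonneg_left hfrac (by positivity)
      _ = (a * A⁻¹ * absv p S) * (e * (absv p (polyToK F P) * (b * A))) := by
          rw [show (a * A⁻¹ * absv p S) * (e * (absv p (polyToK F P) * (b * A)))
            = (a*e*b) * (absv p S * absv p (polyToK F P)) * (A⁻¹ * A) by ring, hAA, mul_one]
    by_contra hcon
    push_neg at hcon
    obtain ⟨hc1, hc2⟩ := max_lt_iff.mp (lt_of_lt_of_le hcon (min_le_right _ _))
    have hT1nn : 0 ≤ a * A⁻¹ * absv p S := by positivity
    have hT2nn : 0 ≤ e * absv p (polyToK F Q) := by positivity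
    have : (a * A⁻¹ * absv p S) * (e * absv p (polyToK F Q)) < Real.sqrt c₀ * Real.sqrt c₀ :=
      mul_lt_mul'' hc1 hc2 hT1nn hT2nn
    rw [Real.mul_self_sqrt hc₀.le] at this
    linarith
  · -- ultrametric case
    have hSQ : absv p (polyToK F Q) ≤ absv p S := by
      rw [hS, show polyToK F Q + z = z + polyToK F Q from add_comm _ _]
      exact le_absv_add hp1 hcase
    have ha1 : (1:ℝ) ≤ (p:ℝ)^(d:ℤ) := by
      calc (1:ℝ) = (p:ℝ)^(0:ℤ) := (zpow_zero _).symm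
      _ ≤ (p:ℝ)^(d:ℤ) := zpow_le_zpow_right₀ hpR.le (by omega)
    refine le_trans (min_le_left _ _) (le_trans ?_ (le_max_left _ _))
    have h1 : (1:ℝ) ≤ absv p S := le_trans hQv1 hSQ
    have hAi : (0:ℝ) ≤ A⁻¹ := by positivity
    calc A⁻¹ = 1 * 1 * A⁻¹ := by ring
    _ ≤ ((p:ℝ)^(d:ℤ) * absv p S) * A⁻¹ := by
        apply mul_le_mul_of_nonneg_right _ hAi
        exact mul_le_mul ha1 h1 zero_le_one (by positivity)
    _ = (p:ℝ)^(d:ℤ) * A⁻¹ * absv p S := by ring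
end
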